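/- arXiv:math/0107029 — 3 statements merged into one kernel-verified Lean document; each statement's English description precedes it below -/
import Mathlib

section
/- Let G be a group and n ≥ 1. Let 𝒜_n(G) be the universal unital ℂ-algebra with generators a_{ij}(g) (1 ≤ i,j ≤ n, g ∈ G) and relations a_{ij}(g)a_{ik}(h) = δ_{jk}a_{ij}(gh), a_{ji}(g)a_{ki}(h) = δ_{jk}a_{ji}(gh), Σ_{l=1}^n a_{il}(1) = 1 = Σ_{l=1}^n a_{li}(1) for all 1 ≤ i,j,k ≤ n and g,h ∈ G. Then 𝒜_n(G) is isomorphic as a ℂ-algebra to the free wreath product ℂ[G] *_w 𝒜_t(n), via the mutually inverse algebra homomorphisms φ : ℂ[G] *_w 𝒜_t(n) → 𝒜_n(G) with φ(ν_i(g)) = Σ_{k=1}^n a_{ik}(g) and φ(x_{ij}) = a_{ij}(1), and ψ : 𝒜_n(G) → ℂ[G] *_w 𝒜_t(n) with ψ(a_{ij}(g)) = ν_i(g)x_{ij}. -/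
open scoped TensorProduct

noncomputable section

/-- Relations presenting the free wreath product `A *_w 𝒜_t(n)`.
Generators: `Sum.inl (i, a)` is `ν_i(a)`, `Sum.inr (i, j)` is `x_{ij}`. -/
inductive FWRel (A : Type) [Ring A] [Algebra ℂ A] (n : ℕ) :
    FreeAlgebra ℂ ((Fin n × A) ⊕ (Fin n × Fin n)) →
      FreeAlgebra ℂ ((Fin n × A) ⊕ (Fin n × Fin n)) → Prop
  | nu_add (i : Fin n) (a b : A) :
      FWRel A n (FreeAlgebra.ι ℂ (Sum.inl (i, a)) + FreeAlgebra.ι ℂ (Sum.inl (i, b)))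
        (FreeAlgebra.ι ℂ (Sum.inl (i, a + b)))
  | nu_mul (i : Fin n) (a b : A) :
      FWRel A n (FreeAlgebra.ι ℂ (Sum.inl (i, a)) * FreeAlgebra.ι ℂ (Sum.inl (i, b)))
        (FreeAlgebra.ι ℂ (Sum.inl (i, a * b)))
  | nu_smul (i : Fin n) (c : ℂ) (a : A) :
      FWRel A n (c • FreeAlgebra.ι ℂ (Sum.inl (i, a))) (FreeAlgebra.ι ℂ (Sum.inl (i, c • a)))
  | nu_one (i : Fin n) : FWRel A n (FreeAlgebra.ι ℂ (Sum.inl (i, (1 : A)))) 1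
  | x_row (i j k : Fin n) :
      FWRel A n (FreeAlgebra.ι ℂ (Sum.inr (i, j)) * FreeAlgebra.ι ℂ (Sum.inr (i, k)))
        (if j = k then FreeAlgebra.ι ℂ (Sum.inr (i, j)) else 0)
  | x_col (i j k : Fin n) :
      FWRel A n (FreeAlgebra.ι ℂ (Sum.inr (j, i)) * FreeAlgebra.ι ℂ (Sum.inr (k, i)))
        (if j = k then FreeAlgebra.ι ℂ (Sum.inr (j, i)) else 0)
  | x_rowSum (i : Fin n) : FWRel A n (∑ l : Fin n, FreeAlgebra.ι ℂ (Sum.inr (i, l))) 1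
  | x_colSum (i : Fin n) : FWRel A n (∑ l : Fin n, FreeAlgebra.ι ℂ (Sum.inr (l, i))) 1
  | comm (i k : Fin n) (a : A) :
      FWRel A n (FreeAlgebra.ι ℂ (Sum.inl (k, a)) * FreeAlgebra.ι ℂ (Sum.inr (k, i)))
        (FreeAlgebra.ι ℂ (Sum.inr (k, i)) * FreeAlgebra.ι ℂ (Sum.inl (k, a)))

/-- The free wreath product `A *_w 𝒜_t(n)`. -/
abbrev FW (A : Type) [Ring A] [Algebra ℂ A] (n : ℕ) : Type := RingQuot (FWRel A n)

/-- The image of `ν_i(a)` in `A *_w 𝒜_t(n)`. -/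
def wnu (A : Type) [Ring A] [Algebra ℂ A] (n : ℕ) (i : Fin n) (a : A) : FW A n :=
  RingQuot.mkAlgHom ℂ (FWRel A n) (FreeAlgebra.ι ℂ (Sum.inl (i, a)))

/-- The image of `x_{ij}` in `A *_w 𝒜_t(n)`. -/
def wx (A : Type) [Ring A] [Algebra ℂ A] (n : ℕ) (i j : Fin n) : FW A n :=
  RingQuot.mkAlgHom ℂ (FWRel A n) (FreeAlgebra.ι ℂ (Sum.inr (i, j)))

/-- `ν_i` as a `ℂ`-linear map `A →ₗ[ℂ] A *_w 𝒜_t(n)`. -/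
def wnuL (A : Type) [Ring A] [Algebra ℂ A] (n : ℕ) (i : Fin n) : A →ₗ[ℂ] FW A n where
  toFun := wnu A n i
  map_add' a b := by
    have h := RingQuot.mkAlgHom_rel ℂ (FWRel.nu_add (A := A) (n := n) i a b)
    simp only [map_add] at h
    exact h.symm
  map_smul' c a := by
    have h := RingQuot.mkAlgHom_rel ℂ (FWRel.nu_smul (A := A) (n := n) i c a)
    simp only [map_smul] at h
    first
      | exact h.symm
      | simpa [wnu] using h.symm


/-- Relations of the universal algebra `𝒜_n(G)`: generators `a_{ij}(g)`. -/
inductive AnGRel (G : Type) [Group G] (n : ℕ) :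
    FreeAlgebra ℂ (Fin n × Fin n × G) → FreeAlgebra ℂ (Fin n × Fin n × G) → Prop
  | row (i j k : Fin n) (g h : G) :
      AnGRel G n (FreeAlgebra.ι ℂ (i, j, g) * FreeAlgebra.ι ℂ (i, k, h))
        (if j = k then FreeAlgebra.ι ℂ (i, j, g * h) else 0)
  | col (i j k : Fin n) (g h : G) :
      AnGRel G n (FreeAlgebra.ι ℂ (j, i, g) * FreeAlgebra.ι ℂ (k, i, h))
        (if j = k then FreeAlgebra.ι ℂ (j, i, g * h) else 0)
  | rowSum (i : Fin n) : AnGRel G n (∑ l : Fin n, FreeAlgebra.ι ℂ (i, l, (1 : G))) 1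
  | colSum (i : Fin n) : AnGRel G n (∑ l : Fin n, FreeAlgebra.ι ℂ (l, i, (1 : G))) 1

/-- The universal algebra `𝒜_n(G)`. -/
abbrev AnG (G : Type) [Group G] (n : ℕ) : Type := RingQuot (AnGRel G n)

/-- The generators `a_{ij}(g)` of `𝒜_n(G)`. -/
def ag (G : Type) [Group G] (n : ℕ) (i j : Fin n) (g : G) : AnG G n :=
  RingQuot.mkAlgHom ℂ (AnGRel G n) (FreeAlgebra.ι ℂ (i, j, g))


namespace Stmt5Aux

variable {G : Type} [Group G] {n : ℕ}

/-! ### Relations in `AnG` -/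

theorem ag_row (i j k : Fin n) (g h : G) :
    ag G n i j g * ag G n i k h = if j = k then ag G n i j (g * h) else 0 := by
  have h' := RingQuot.mkAlgHom_rel ℂ (AnGRel.row (G := G) (n := n) i j k g h)
  simpa [ag, map_mul, apply_ite (RingQuot.mkAlgHom ℂ (AnGRel G n))] using h'

theorem ag_col (i j k : Fin n) (g h : G) :
    ag G n j i g * ag G n k i h = if j = k then ag G n j i (g * h) else 0 := by
  have h' := RingQuot.mkAlgHom_rel ℂ (AnGRel.col (G := G) (n := n) i j k g h)
  simpa [ag, map_mul, apply_ite (RingQuot.mkAlgHom ℂ (AnGRel G n))] using h'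

theorem ag_rowSum (i : Fin n) : (∑ l : Fin n, ag G n i l (1 : G)) = 1 := by
  have h' := RingQuot.mkAlgHom_rel ℂ (AnGRel.rowSum (G := G) (n := n) i)
  simpa [ag, map_sum] using h'

theorem ag_colSum (i : Fin n) : (∑ l : Fin n, ag G n l i (1 : G)) = 1 := by
  have h' := RingQuot.mkAlgHom_rel ℂ (AnGRel.colSum (G := G) (n := n) i)
  simpa [ag, map_sum] using h'

/-! ### Relations in `FW` -/

variable {A : Type} [Ring A] [Algebra ℂ A]

theorem wnu_mul (i : Fin n) (a b : A) : wnu A n i a * wnu A n i b = wnu A n i (a * b) := by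
  have h' := RingQuot.mkAlgHom_rel ℂ (FWRel.nu_mul (A := A) (n := n) i a b)
  simpa [wnu, map_mul] using h'

theorem wnu_one (i : Fin n) : wnu A n i (1 : A) = 1 := by
  have h' := RingQuot.mkAlgHom_rel ℂ (FWRel.nu_one (A := A) (n := n) i)
  simpa [wnu] using h'

theorem wx_row (i j k : Fin n) :
    wx A n i j * wx A n i k = if j = k then wx A n i j else 0 := by
  have h' := RingQuot.mkAlgHom_rel ℂ (FWRel.x_row (A := A) (n := n) i j k)
  simpa [wx, map_mul, apply_ite (RingQuot.mkAlgHom ℂ (FWRel A n))] using h'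

theorem wx_col (i j k : Fin n) :
    wx A n j i * wx A n k i = if j = k then wx A n j i else 0 := by
  have h' := RingQuot.mkAlgHom_rel ℂ (FWRel.x_col (A := A) (n := n) i j k)
  simpa [wx, map_mul, apply_ite (RingQuot.mkAlgHom ℂ (FWRel A n))] using h'

theorem wx_rowSum (i : Fin n) : (∑ l : Fin n, wx A n i l) = 1 := by
  have h' := RingQuot.mkAlgHom_rel ℂ (FWRel.x_rowSum (A := A) (n := n) i)
  simpa [wx, map_sum] using h'

theorem wx_colSum (i : Fin n) : (∑ l : Fin n, wx A n l i) = 1 := by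
  have h' := RingQuot.mkAlgHom_rel ℂ (FWRel.x_colSum (A := A) (n := n) i)
  simpa [wx, map_sum] using h'

theorem wcomm (i k : Fin n) (a : A) :
    wnu A n k a * wx A n k i = wx A n k i * wnu A n k a := by
  have h' := RingQuot.mkAlgHom_rel ℂ (FWRel.comm (A := A) (n := n) i k a)
  simpa [wnu, wx, map_mul] using h'

/-! ### The map `φ` -/

/-- `g ↦ Σ_k a_{ik}(g)` as a monoid hom. -/
def muG (G : Type) [Group G] (n : ℕ) (i : Fin n) : G →* AnG G n where
  toFun g := ∑ k : Fin n, ag G n i k g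
  map_one' := ag_rowSum i
  map_mul' g h := by
    rw [Finset.sum_mul_sum]
    simp [ag_row]

/-- `φ` on the copy `ν_i` of the group algebra. -/
def philG (G : Type) [Group G] (n : ℕ) (i : Fin n) : MonoidAlgebra ℂ G →ₐ[ℂ] AnG G n :=
  MonoidAlgebra.lift ℂ (AnG G n) G (muG G n i)

theorem philG_of (i : Fin n) (g : G) :
    philG G n i (MonoidAlgebra.of ℂ G g) = ∑ k : Fin n, ag G n i k g := by
  simp [philG, muG]

theorem philG_comm (i k : Fin n) (a : MonoidAlgebra ℂ G) :
    philG G n k a * ag G n k i 1 = ag G n k i 1 * philG G n k a := by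
  induction a using MonoidAlgebra.induction_on with
  | of g =>
    rw [philG_of, Finset.sum_mul, Finset.mul_sum]
    simp [ag_row, ag_col]
  | add f g hf hg => simp [map_add, add_mul, mul_add, hf, hg]
  | smul r f hf => simp [map_smul, smul_mul_assoc, mul_smul_comm, hf]

/-- The map on free-algebra generators defining `φ`. -/
def phiGen (G : Type) [Group G] (n : ℕ) :
    ((Fin n × MonoidAlgebra ℂ G) ⊕ (Fin n × Fin n)) → AnG G n
  | Sum.inl (i, a) => philG G n i a
  | Sum.inr (i, j) => ag G n i j 1

theorem phi_rel {x y : FreeAlgebra ℂ ((Fin n × MonoidAlgebra ℂ G) ⊕ (Fin n × Fin n))}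
    (h : FWRel (MonoidAlgebra ℂ G) n x y) :
    FreeAlgebra.lift ℂ (phiGen G n) x = FreeAlgebra.lift ℂ (phiGen G n) y := by
  induction h with
  | nu_add i a b => simp [phiGen, map_add]
  | nu_mul i a b => simp [phiGen, map_mul]
  | nu_smul i c a => simp [phiGen, map_smul]
  | nu_one i => simp [phiGen, map_one]
  | x_row i j k =>
    simp only [map_mul, apply_ite (FreeAlgebra.lift ℂ (phiGen G n)), map_zero,
      FreeAlgebra.lift_ι_apply, phiGen]
    simpa using ag_row (G := G) i j k 1 1
  | x_col i j k =>
    simp only [map_mul, apply_ite (FreeAlgebra.lift ℂ (phiGen G n)), map_zero,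
      FreeAlgebra.lift_ι_apply, phiGen]
    simpa using ag_col (G := G) i j k 1 1
  | x_rowSum i => simp [phiGen, ag_rowSum i]
  | x_colSum i => simp [phiGen, ag_colSum i]
  | comm i k a =>
    simp only [map_mul, FreeAlgebra.lift_ι_apply, phiGen]
    exact philG_comm i k a

/-- The homomorphism `φ : FW (ℂ[G]) n →ₐ[ℂ] AnG G n`. -/
def phi (G : Type) [Group G] (n : ℕ) : FW (MonoidAlgebra ℂ G) n →ₐ[ℂ] AnG G n :=
  RingQuot.liftAlgHom ℂ ⟨FreeAlgebra.lift ℂ (phiGen G n), fun _ _ h => phi_rel h⟩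

theorem phi_wnu (i : Fin n) (a : MonoidAlgebra ℂ G) :
    phi G n (wnu (MonoidAlgebra ℂ G) n i a) = philG G n i a := by
  simp [phi, wnu, RingQuot.liftAlgHom_mkAlgHom_apply, phiGen]

theorem phi_wx (i j : Fin n) : phi G n (wx (MonoidAlgebra ℂ G) n i j) = ag G n i j 1 := by
  simp [phi, wx, RingQuot.liftAlgHom_mkAlgHom_apply, phiGen]

/-! ### The map `ψ` -/

/-- The map on free-algebra generators defining `ψ`. -/
def psiGen (G : Type) [Group G] (n : ℕ) : Fin n × Fin n × G → FW (MonoidAlgebra ℂ G) n :=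
  fun p => wnu (MonoidAlgebra ℂ G) n p.1 (MonoidAlgebra.of ℂ G p.2.2) *
    wx (MonoidAlgebra ℂ G) n p.1 p.2.1

theorem psi_rel {x y : FreeAlgebra ℂ (Fin n × Fin n × G)} (h : AnGRel G n x y) :
    FreeAlgebra.lift ℂ (psiGen G n) x = FreeAlgebra.lift ℂ (psiGen G n) y := by
  induction h with
  | row i j k g h =>
    simp only [map_mul, apply_ite (FreeAlgebra.lift ℂ (psiGen G n)), map_zero,
      FreeAlgebra.lift_ι_apply, psiGen]
    rw [mul_assoc, ← mul_assoc (wx (MonoidAlgebra ℂ G) n i j), ← wcomm, mul_assoc,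
      ← mul_assoc, ← mul_assoc, wnu_mul, mul_assoc, wx_row]
    simp [mul_ite, ← map_mul]
  | col i j k g h =>
    simp only [map_mul, apply_ite (FreeAlgebra.lift ℂ (psiGen G n)), map_zero,
      FreeAlgebra.lift_ι_apply, psiGen]
    rw [mul_assoc, wcomm i k, ← mul_assoc (wx (MonoidAlgebra ℂ G) n j i), wx_col]
    by_cases hjk : j = k
    · subst hjk
      rw [if_pos rfl, if_pos rfl, ← wcomm, ← mul_assoc, wnu_mul, ← map_mul]
    · simp [hjk]
  | rowSum i =>
    simp only [map_sum, map_one, FreeAlgebra.lift_ι_apply, psiGen]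
    simp [wnu_one, wx_rowSum i]
  | colSum i =>
    simp only [map_sum, map_one, FreeAlgebra.lift_ι_apply, psiGen]
    simp [wnu_one, wx_colSum i]

/-- The homomorphism `ψ : AnG G n →ₐ[ℂ] FW (ℂ[G]) n`. -/
def psi (G : Type) [Group G] (n : ℕ) : AnG G n →ₐ[ℂ] FW (MonoidAlgebra ℂ G) n :=
  RingQuot.liftAlgHom ℂ ⟨FreeAlgebra.lift ℂ (psiGen G n), fun _ _ h => psi_rel h⟩

theorem psi_ag (i j : Fin n) (g : G) :
    psi G n (ag G n i j g) =
      wnu (MonoidAlgebra ℂ G) n i (MonoidAlgebra.of ℂ G g) * wx (MonoidAlgebra ℂ G) n i j := by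
  simp [psi, ag, RingQuot.liftAlgHom_mkAlgHom_apply, psiGen]

end Stmt5Aux

/-- For a group `G` and `n ≥ 1`, the universal algebra `𝒜_n(G)` is
isomorphic as a `ℂ`-algebra to the free wreath product `ℂ[G] *_w 𝒜_t(n)`, via the mutually
inverse homomorphisms `φ` (with `φ(ν_i(g)) = Σ_k a_{ik}(g)`, `φ(x_{ij}) = a_{ij}(1)`) and
`ψ` (with `ψ(a_{ij}(g)) = ν_i(g)x_{ij}`). -/
theorem stmt_5 (G : Type) [Group G] (n : ℕ) (hn : 1 ≤ n) :
    ∃ (φ : FW (MonoidAlgebra ℂ G) n →ₐ[ℂ] AnG G n)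
      (ψ : AnG G n →ₐ[ℂ] FW (MonoidAlgebra ℂ G) n),
      (∀ (i : Fin n) (g : G),
        φ (wnu (MonoidAlgebra ℂ G) n i (MonoidAlgebra.of ℂ G g)) =
          ∑ k : Fin n, ag G n i k g) ∧
      (∀ i j : Fin n, φ (wx (MonoidAlgebra ℂ G) n i j) = ag G n i j 1) ∧
      (∀ (i j : Fin n) (g : G),
        ψ (ag G n i j g) =
          wnu (MonoidAlgebra ℂ G) n i (MonoidAlgebra.of ℂ G g) *
            wx (MonoidAlgebra ℂ G) n i j) ∧
      φ.comp ψ = AlgHom.id ℂ (AnG G n) ∧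
      ψ.comp φ = AlgHom.id ℂ (FW (MonoidAlgebra ℂ G) n) := by
  classical
  refine ⟨Stmt5Aux.phi G n, Stmt5Aux.psi G n, ?_, ?_, Stmt5Aux.psi_ag, ?_, ?_⟩
  · intro i g
    rw [Stmt5Aux.phi_wnu, Stmt5Aux.philG_of]
  · exact Stmt5Aux.phi_wx
  · apply RingQuot.ringQuot_ext'
    apply FreeAlgebra.hom_ext
    funext p
    obtain ⟨i, j, g⟩ := p
    simp only [AlgHom.comp_apply, AlgHom.coe_comp, Function.comp_apply, AlgHom.id_apply,
      FreeAlgebra.lift_ι_apply]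
    show Stmt5Aux.phi G n (Stmt5Aux.psi G n (ag G n i j g)) = ag G n i j g
    rw [Stmt5Aux.psi_ag, map_mul, Stmt5Aux.phi_wnu, Stmt5Aux.phi_wx, Stmt5Aux.philG_of,
      Finset.sum_mul]
    simp [Stmt5Aux.ag_row]
  · apply RingQuot.ringQuot_ext'
    apply FreeAlgebra.hom_ext
    funext p
    simp only [AlgHom.comp_apply, AlgHom.coe_comp, Function.comp_apply, AlgHom.id_apply,
      FreeAlgebra.lift_ι_apply]
    rcases p with ⟨i, a⟩ | ⟨i, j⟩
    · show Stmt5Aux.psi G n (Stmt5Aux.phi G n (wnu (MonoidAlgebra ℂ G) n i a)) =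
        wnu (MonoidAlgebra ℂ G) n i a
      rw [Stmt5Aux.phi_wnu]
      induction a using MonoidAlgebra.induction_on with
      | of g =>
        rw [Stmt5Aux.philG_of, map_sum]
        have : ∀ k : Fin n, Stmt5Aux.psi G n (ag G n i k g) =
            wnu (MonoidAlgebra ℂ G) n i (MonoidAlgebra.of ℂ G g) *
              wx (MonoidAlgebra ℂ G) n i k := fun k => Stmt5Aux.psi_ag i k g
        rw [Finset.sum_congr rfl fun k _ => this k, ← Finset.mul_sum, Stmt5Aux.wx_rowSum,
          mul_one]
      | add f g hf hg =>
        rw [map_add, map_add, hf, hg]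
        exact ((wnuL (MonoidAlgebra ℂ G) n i).map_add f g).symm
      | smul r f hf =>
        rw [map_smul, map_smul, hf]
        exact ((wnuL (MonoidAlgebra ℂ G) n i).map_smul r f).symm
    · show Stmt5Aux.psi G n (Stmt5Aux.phi G n (wx (MonoidAlgebra ℂ G) n i j)) =
        wx (MonoidAlgebra ℂ G) n i j
      rw [Stmt5Aux.phi_wx, Stmt5Aux.psi_ag]
      have : (MonoidAlgebra.of ℂ G) (1 : G) = (1 : MonoidAlgebra ℂ G) := map_one _
      rw [this, Stmt5Aux.wnu_one, one_mul]
end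
end

section
/- Let 𝒢 = (V,E) be a finite connected graph and n ≥ 1. There exists an algebra homomorphism Ψ : W(𝒢,n) → A_aut(𝒢^{⊔n}) satisfying Ψ(u^k_{ij}) = Σ_{l=1}^n X_{(k,i),(l,j)} for all k and i,j ∈ V, and Ψ(x_{kl}) = Σ_{r∈V} X_{(k,r),(l,j)} for all k,l and every j ∈ V (this sum being independent of the choice of j). -/
noncomputable section

/-- The graph relations (4.1)–(4.4) presenting the quantum automorphism algebra
`A_aut(𝒢)` of a finite graph `𝒢 = (V, E)`, as relations on the free algebra on the
generators `X_{ij}` (`i, j ∈ V`). -/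
inductive GraphRel (V : Type) [Fintype V] [DecidableEq V] (E : Finset (V × V)) :
    FreeAlgebra ℂ (V × V) → FreeAlgebra ℂ (V × V) → Prop
  | r1row (i j k : V) :
      GraphRel V E (FreeAlgebra.ι ℂ (i, j) * FreeAlgebra.ι ℂ (i, k))
        (if j = k then FreeAlgebra.ι ℂ (i, j) else 0)
  | r1col (i j k : V) :
      GraphRel V E (FreeAlgebra.ι ℂ (j, i) * FreeAlgebra.ι ℂ (k, i))
        (if j = k then FreeAlgebra.ι ℂ (j, i) else 0)
  | r1rowSum (i : V) : GraphRel V E (∑ l : V, FreeAlgebra.ι ℂ (i, l)) 1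
  | r1colSum (i : V) : GraphRel V E (∑ l : V, FreeAlgebra.ι ℂ (l, i)) 1
  | r2a (γ : V × V) (hγ : γ ∈ E) (i k : V) (h : (i, k) ∉ E) :
      GraphRel V E (FreeAlgebra.ι ℂ (γ.1, i) * FreeAlgebra.ι ℂ (γ.2, k)) 0
  | r2a' (γ : V × V) (hγ : γ ∈ E) (i k : V) (h : (i, k) ∉ E) :
      GraphRel V E (FreeAlgebra.ι ℂ (γ.2, k) * FreeAlgebra.ι ℂ (γ.1, i)) 0
  | r2b (γ : V × V) (hγ : γ ∈ E) (i k : V) (h : (i, k) ∉ E) :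
      GraphRel V E (FreeAlgebra.ι ℂ (i, γ.1) * FreeAlgebra.ι ℂ (k, γ.2)) 0
  | r2b' (γ : V × V) (hγ : γ ∈ E) (i k : V) (h : (i, k) ∉ E) :
      GraphRel V E (FreeAlgebra.ι ℂ (k, γ.2) * FreeAlgebra.ι ℂ (i, γ.1)) 0
  | r3 (γ γ' : V × V) (hγ : γ ∈ E) (hγ' : γ' ∈ E) :
      GraphRel V E (FreeAlgebra.ι ℂ (γ.1, γ'.1) * FreeAlgebra.ι ℂ (γ.2, γ'.2))
        (FreeAlgebra.ι ℂ (γ.2, γ'.2) * FreeAlgebra.ι ℂ (γ.1, γ'.1))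
  | r4a (γ : V × V) (hγ : γ ∈ E) :
      GraphRel V E (∑ γ' ∈ E, FreeAlgebra.ι ℂ (γ'.1, γ.1) * FreeAlgebra.ι ℂ (γ'.2, γ.2)) 1
  | r4b (γ : V × V) (hγ : γ ∈ E) :
      GraphRel V E (∑ γ' ∈ E, FreeAlgebra.ι ℂ (γ.1, γ'.1) * FreeAlgebra.ι ℂ (γ.2, γ'.2)) 1

/-- The quantum automorphism algebra `A_aut(𝒢)` of the finite graph `𝒢 = (V, E)`. -/
abbrev AAut (V : Type) [Fintype V] [DecidableEq V] (E : Finset (V × V)) : Type :=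
  RingQuot (GraphRel V E)

/-- The generators `X_{ij}` of `A_aut(𝒢)`. -/
def XA (V : Type) [Fintype V] [DecidableEq V] (E : Finset (V × V)) (i j : V) : AAut V E :=
  RingQuot.mkAlgHom ℂ (GraphRel V E) (FreeAlgebra.ι ℂ (i, j))

/-- The edge set of the `n`-fold disjoint union `𝒢^{⊔n}` of `𝒢 = (V, E)`, on the vertex
set `Fin n × V`. -/
def unionEdges (V : Type) [Fintype V] [DecidableEq V] (E : Finset (V × V)) (n : ℕ) :
    Finset ((Fin n × V) × (Fin n × V)) :=
  (Finset.univ ×ˢ E).image fun p => ((p.1, p.2.1), (p.1, p.2.2))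

/-- Relations presenting `W(𝒢,n) = A_aut(𝒢) *_w 𝒜_t(n)`: generators `Sum.inl (k, i, j)`
(the elements `u^k_{ij}`) and `Sum.inr (k, l)` (the elements `x_{kl}`); for each `k` the
family `u^k` satisfies the graph relations for `𝒢`, the `x_{kl}` satisfy the magic unitary
relations of `𝒜_t(n)`, and `u^k_{ij} x_{kl} = x_{kl} u^k_{ij}`. -/
inductive WRel (V : Type) [Fintype V] [DecidableEq V] (E : Finset (V × V)) (n : ℕ) :
    FreeAlgebra ℂ ((Fin n × V × V) ⊕ (Fin n × Fin n)) →
      FreeAlgebra ℂ ((Fin n × V × V) ⊕ (Fin n × Fin n)) → Prop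
  | u1row (m : Fin n) (i j k : V) :
      WRel V E n (FreeAlgebra.ι ℂ (Sum.inl (m, i, j)) * FreeAlgebra.ι ℂ (Sum.inl (m, i, k)))
        (if j = k then FreeAlgebra.ι ℂ (Sum.inl (m, i, j)) else 0)
  | u1col (m : Fin n) (i j k : V) :
      WRel V E n (FreeAlgebra.ι ℂ (Sum.inl (m, j, i)) * FreeAlgebra.ι ℂ (Sum.inl (m, k, i)))
        (if j = k then FreeAlgebra.ι ℂ (Sum.inl (m, j, i)) else 0)
  | u1rowSum (m : Fin n) (i : V) :
      WRel V E n (∑ l : V, FreeAlgebra.ι ℂ (Sum.inl (m, i, l))) 1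
  | u1colSum (m : Fin n) (i : V) :
      WRel V E n (∑ l : V, FreeAlgebra.ι ℂ (Sum.inl (m, l, i))) 1
  | u2a (m : Fin n) (γ : V × V) (hγ : γ ∈ E) (i k : V) (h : (i, k) ∉ E) :
      WRel V E n (FreeAlgebra.ι ℂ (Sum.inl (m, γ.1, i)) * FreeAlgebra.ι ℂ (Sum.inl (m, γ.2, k))) 0
  | u2a' (m : Fin n) (γ : V × V) (hγ : γ ∈ E) (i k : V) (h : (i, k) ∉ E) :
      WRel V E n (FreeAlgebra.ι ℂ (Sum.inl (m, γ.2, k)) * FreeAlgebra.ι ℂ (Sum.inl (m, γ.1, i))) 0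
  | u2b (m : Fin n) (γ : V × V) (hγ : γ ∈ E) (i k : V) (h : (i, k) ∉ E) :
      WRel V E n (FreeAlgebra.ι ℂ (Sum.inl (m, i, γ.1)) * FreeAlgebra.ι ℂ (Sum.inl (m, k, γ.2))) 0
  | u2b' (m : Fin n) (γ : V × V) (hγ : γ ∈ E) (i k : V) (h : (i, k) ∉ E) :
      WRel V E n (FreeAlgebra.ι ℂ (Sum.inl (m, k, γ.2)) * FreeAlgebra.ι ℂ (Sum.inl (m, i, γ.1))) 0
  | u3 (m : Fin n) (γ γ' : V × V) (hγ : γ ∈ E) (hγ' : γ' ∈ E) :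
      WRel V E n (FreeAlgebra.ι ℂ (Sum.inl (m, γ.1, γ'.1)) * FreeAlgebra.ι ℂ (Sum.inl (m, γ.2, γ'.2)))
        (FreeAlgebra.ι ℂ (Sum.inl (m, γ.2, γ'.2)) * FreeAlgebra.ι ℂ (Sum.inl (m, γ.1, γ'.1)))
  | u4a (m : Fin n) (γ : V × V) (hγ : γ ∈ E) :
      WRel V E n
        (∑ γ' ∈ E, FreeAlgebra.ι ℂ (Sum.inl (m, γ'.1, γ.1)) * FreeAlgebra.ι ℂ (Sum.inl (m, γ'.2, γ.2))) 1
  | u4b (m : Fin n) (γ : V × V) (hγ : γ ∈ E) :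
      WRel V E n
        (∑ γ' ∈ E, FreeAlgebra.ι ℂ (Sum.inl (m, γ.1, γ'.1)) * FreeAlgebra.ι ℂ (Sum.inl (m, γ.2, γ'.2))) 1
  | xrow (k l l' : Fin n) :
      WRel V E n (FreeAlgebra.ι ℂ (Sum.inr (k, l)) * FreeAlgebra.ι ℂ (Sum.inr (k, l')))
        (if l = l' then FreeAlgebra.ι ℂ (Sum.inr (k, l)) else 0)
  | xcol (k l l' : Fin n) :
      WRel V E n (FreeAlgebra.ι ℂ (Sum.inr (l, k)) * FreeAlgebra.ι ℂ (Sum.inr (l', k)))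
        (if l = l' then FreeAlgebra.ι ℂ (Sum.inr (l, k)) else 0)
  | xrowSum (k : Fin n) : WRel V E n (∑ l : Fin n, FreeAlgebra.ι ℂ (Sum.inr (k, l))) 1
  | xcolSum (k : Fin n) : WRel V E n (∑ l : Fin n, FreeAlgebra.ι ℂ (Sum.inr (l, k))) 1
  | comm (k l : Fin n) (i j : V) :
      WRel V E n (FreeAlgebra.ι ℂ (Sum.inl (k, i, j)) * FreeAlgebra.ι ℂ (Sum.inr (k, l)))
        (FreeAlgebra.ι ℂ (Sum.inr (k, l)) * FreeAlgebra.ι ℂ (Sum.inl (k, i, j)))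

/-- The algebra `W(𝒢,n)`, a presentation of the free wreath product
`A_aut(𝒢) *_w 𝒜_t(n)`. -/
abbrev WAlg (V : Type) [Fintype V] [DecidableEq V] (E : Finset (V × V)) (n : ℕ) : Type :=
  RingQuot (WRel V E n)

/-- The generators `u^k_{ij}` of `W(𝒢,n)`. -/
def wu (V : Type) [Fintype V] [DecidableEq V] (E : Finset (V × V)) (n : ℕ)
    (k : Fin n) (i j : V) : WAlg V E n :=
  RingQuot.mkAlgHom ℂ (WRel V E n) (FreeAlgebra.ι ℂ (Sum.inl (k, i, j)))

/-- The generators `x_{kl}` of `W(𝒢,n)`. -/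
def wxg (V : Type) [Fintype V] [DecidableEq V] (E : Finset (V × V)) (n : ℕ)
    (k l : Fin n) : WAlg V E n :=
  RingQuot.mkAlgHom ℂ (WRel V E n) (FreeAlgebra.ι ℂ (Sum.inr (k, l)))

/-- Adjacency (an edge traversed in either direction). -/
def Adj (V : Type) [Fintype V] [DecidableEq V] (E : Finset (V × V)) (u v : V) : Prop :=
  (u, v) ∈ E ∨ (v, u) ∈ E


section XALemmas

variable {V : Type} [Fintype V] [DecidableEq V] {E : Finset (V × V)}

lemma XA_row_mul (i j k : V) :
    XA V E i j * XA V E i k = if j = k then XA V E i j else 0 := by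
  have h := RingQuot.mkAlgHom_rel ℂ (GraphRel.r1row (V := V) (E := E) i j k)
  unfold XA; rw [← map_mul, h]; split_ifs <;> simp

lemma XA_col_mul (i j k : V) :
    XA V E j i * XA V E k i = if j = k then XA V E j i else 0 := by
  have h := RingQuot.mkAlgHom_rel ℂ (GraphRel.r1col (V := V) (E := E) i j k)
  unfold XA; rw [← map_mul, h]; split_ifs <;> simp

lemma XA_row_sum (i : V) : ∑ l : V, XA V E i l = 1 := by
  have h := RingQuot.mkAlgHom_rel ℂ (GraphRel.r1rowSum (V := V) (E := E) i)
  simp only [map_sum, map_one] at h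
  exact h

lemma XA_col_sum (i : V) : ∑ l : V, XA V E l i = 1 := by
  have h := RingQuot.mkAlgHom_rel ℂ (GraphRel.r1colSum (V := V) (E := E) i)
  simp only [map_sum, map_one] at h
  exact h

lemma XA_r2a (γ : V × V) (hγ : γ ∈ E) (c d : V) (h : (c, d) ∉ E) :
    XA V E γ.1 c * XA V E γ.2 d = 0 := by
  have h' := RingQuot.mkAlgHom_rel ℂ (GraphRel.r2a (V := V) (E := E) γ hγ c d h)
  simp only [map_mul, map_zero] at h'
  exact h'

lemma XA_r2a' (γ : V × V) (hγ : γ ∈ E) (c d : V) (h : (c, d) ∉ E) :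
    XA V E γ.2 d * XA V E γ.1 c = 0 := by
  have h' := RingQuot.mkAlgHom_rel ℂ (GraphRel.r2a' (V := V) (E := E) γ hγ c d h)
  simp only [map_mul, map_zero] at h'
  exact h'

lemma XA_r2b (γ : V × V) (hγ : γ ∈ E) (c d : V) (h : (c, d) ∉ E) :
    XA V E c γ.1 * XA V E d γ.2 = 0 := by
  have h' := RingQuot.mkAlgHom_rel ℂ (GraphRel.r2b (V := V) (E := E) γ hγ c d h)
  simp only [map_mul, map_zero] at h'
  exact h'

lemma XA_r2b' (γ : V × V) (hγ : γ ∈ E) (c d : V) (h : (c, d) ∉ E) :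
    XA V E d γ.2 * XA V E c γ.1 = 0 := by
  have h' := RingQuot.mkAlgHom_rel ℂ (GraphRel.r2b' (V := V) (E := E) γ hγ c d h)
  simp only [map_mul, map_zero] at h'
  exact h'

lemma XA_r3 (γ γ' : V × V) (hγ : γ ∈ E) (hγ' : γ' ∈ E) :
    XA V E γ.1 γ'.1 * XA V E γ.2 γ'.2 = XA V E γ.2 γ'.2 * XA V E γ.1 γ'.1 := by
  have h' := RingQuot.mkAlgHom_rel ℂ (GraphRel.r3 (V := V) (E := E) γ γ' hγ hγ')
  simp only [map_mul] at h'
  exact h'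

lemma XA_r4b (γ : V × V) (hγ : γ ∈ E) :
    ∑ γ' ∈ E, XA V E γ.1 γ'.1 * XA V E γ.2 γ'.2 = 1 := by
  have h' := RingQuot.mkAlgHom_rel ℂ (GraphRel.r4b (V := V) (E := E) γ hγ)
  simp only [map_sum, map_mul, map_one] at h'
  exact h'

end XALemmas

lemma diag_helper {ι : Type*} [Fintype ι] [DecidableEq ι] {A : Type*}
    [NonUnitalNonAssocSemiring A] (f g : ι → A) (h : ∀ i j, i ≠ j → f i * g j = 0) :
    (∑ i, f i) * ∑ j, g j = ∑ i, f i * g i := by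
  rw [Finset.sum_mul_sum]
  refine Finset.sum_congr rfl fun i _ => ?_
  exact Finset.sum_eq_single i (fun j _ hj => h i j (Ne.symm hj))
    (fun hi => absurd (Finset.mem_univ i) hi)

lemma mem_unionEdges_iff {V : Type} [Fintype V] [DecidableEq V] {E : Finset (V × V)}
    {n : ℕ} {p q : Fin n × V} :
    (p, q) ∈ unionEdges V E n ↔ p.1 = q.1 ∧ (p.2, q.2) ∈ E := by
  obtain ⟨pk, pv⟩ := p
  obtain ⟨qk, qv⟩ := q
  simp only [unionEdges, Finset.mem_image, Finset.mem_product, Finset.mem_univ, true_and,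
    Prod.mk.injEq, Prod.exists]
  constructor
  · rintro ⟨m, a, b, hab, ⟨h1, h2⟩, h3, h4⟩
    subst h1; subst h2; subst h3; subst h4
    exact ⟨rfl, hab⟩
  · rintro ⟨rfl, h⟩
    exact ⟨pk, pv, qv, h, ⟨rfl, rfl⟩, rfl, rfl⟩


section Orth

variable {V : Type} [Fintype V] [DecidableEq V] {E : Finset (V × V)} {n : ℕ}

lemma not_mem_unionEdges {l l' : Fin n} (hll : l ≠ l') (b b' : V) :
    (((l, b) : Fin n × V), ((l', b') : Fin n × V)) ∉ unionEdges V E n := by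
  rw [mem_unionEdges_iff]
  exact fun h => hll h.1

lemma adj1 {c a' : V} (hadj : Adj V E c a') (k : Fin n) {l l' : Fin n} (hll : l ≠ l')
    (b b' : V) :
    XA (Fin n × V) (unionEdges V E n) (k, c) (l, b) *
      XA (Fin n × V) (unionEdges V E n) (k, a') (l', b') = 0 := by
  rcases hadj with h | h
  · exact XA_r2a ((k, c), (k, a')) (mem_unionEdges_iff.2 ⟨rfl, h⟩) (l, b) (l', b')
      (not_mem_unionEdges hll b b')
  · exact XA_r2a' ((k, a'), (k, c)) (mem_unionEdges_iff.2 ⟨rfl, h⟩) (l', b') (l, b)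
      (not_mem_unionEdges hll.symm b' b)

lemma orth1 (hconn : ∀ u v : V, Relation.ReflTransGen (Adj V E) u v)
    (k : Fin n) (a a' : V) {l l' : Fin n} (hll : l ≠ l') (b b' : V) :
    XA (Fin n × V) (unionEdges V E n) (k, a) (l, b) *
      XA (Fin n × V) (unionEdges V E n) (k, a') (l', b') = 0 := by
  have h := hconn a a'
  induction h generalizing l l' b b' with
  | refl =>
      rw [XA_row_mul, if_neg]
      intro hc
      exact hll (congrArg Prod.fst hc)
  | @tail m c hrt hadj ih =>
      rw [← one_mul (XA (Fin n × V) (unionEdges V E n) (k, c) (l', b')),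
        ← XA_row_sum (E := unionEdges V E n) ((k, m) : Fin n × V), Finset.sum_mul,
        Finset.mul_sum]
      refine Finset.sum_eq_zero fun d _ => ?_
      obtain ⟨l2, b2⟩ := d
      by_cases h2 : l2 = l'
      · subst h2
        rw [← mul_assoc, ih hll b b2, zero_mul]
      · rw [adj1 hadj k h2 b2 b', mul_zero]

lemma adj2 {c b' : V} (hadj : Adj V E c b') {k k' : Fin n} (hkk : k ≠ k') (l : Fin n)
    (x y : V) :
    XA (Fin n × V) (unionEdges V E n) (k, x) (l, c) *
      XA (Fin n × V) (unionEdges V E n) (k', y) (l, b') = 0 := by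
  rcases hadj with h | h
  · exact XA_r2b ((l, c), (l, b')) (mem_unionEdges_iff.2 ⟨rfl, h⟩) (k, x) (k', y)
      (not_mem_unionEdges hkk x y)
  · exact XA_r2b' ((l, b'), (l, c)) (mem_unionEdges_iff.2 ⟨rfl, h⟩) (k', y) (k, x)
      (not_mem_unionEdges hkk.symm y x)

lemma orth2 (hconn : ∀ u v : V, Relation.ReflTransGen (Adj V E) u v)
    {k k' : Fin n} (hkk : k ≠ k') (a a' : V) (l : Fin n) (b b' : V) :
    XA (Fin n × V) (unionEdges V E n) (k, a) (l, b) *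
      XA (Fin n × V) (unionEdges V E n) (k', a') (l, b') = 0 := by
  have h := hconn b b'
  induction h generalizing k k' a a' with
  | refl =>
      rw [XA_col_mul, if_neg]
      intro hc
      exact hkk (congrArg Prod.fst hc)
  | @tail m c hrt hadj ih =>
      rw [← one_mul (XA (Fin n × V) (unionEdges V E n) (k', a') (l, c)),
        ← XA_col_sum (E := unionEdges V E n) ((l, m) : Fin n × V), Finset.sum_mul,
        Finset.mul_sum]
      refine Finset.sum_eq_zero fun d _ => ?_
      obtain ⟨k2, a2⟩ := d
      by_cases h2 : k2 = k
      · subst h2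
        rw [adj2 hadj hkk l a2 a', mul_zero]
      · rw [← mul_assoc, ih (Ne.symm h2) a a2, zero_mul]

lemma P_orth (hconn : ∀ u v : V, Relation.ReflTransGen (Adj V E) u v)
    {k k' : Fin n} (hkk : k ≠ k') (l : Fin n) (j j' : V) :
    (∑ r : V, XA (Fin n × V) (unionEdges V E n) (k, r) (l, j)) *
      (∑ r : V, XA (Fin n × V) (unionEdges V E n) (k', r) (l, j')) = 0 := by
  rw [Finset.sum_mul_sum]
  exact Finset.sum_eq_zero fun r _ => Finset.sum_eq_zero fun r' _ => orth2 hconn hkk r r' l j j'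

lemma P_col_total (l : Fin n) (j : V) :
    ∑ k' : Fin n, ∑ r : V, XA (Fin n × V) (unionEdges V E n) (k', r) (l, j) = 1 := by
  exact (Fintype.sum_prod_type
    (f := fun p : Fin n × V => XA (Fin n × V) (unionEdges V E n) p (l, j))).symm.trans
    (XA_col_sum ((l, j) : Fin n × V))

lemma P_mul_P (hconn : ∀ u v : V, Relation.ReflTransGen (Adj V E) u v)
    (k l : Fin n) (j j' : V) :
    (∑ r : V, XA (Fin n × V) (unionEdges V E n) (k, r) (l, j)) *
      (∑ r : V, XA (Fin n × V) (unionEdges V E n) (k, r) (l, j')) =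
      ∑ r : V, XA (Fin n × V) (unionEdges V E n) (k, r) (l, j) := by
  calc (∑ r : V, XA (Fin n × V) (unionEdges V E n) (k, r) (l, j)) *
      (∑ r : V, XA (Fin n × V) (unionEdges V E n) (k, r) (l, j'))
      = ∑ k' : Fin n, (∑ r : V, XA (Fin n × V) (unionEdges V E n) (k, r) (l, j)) *
          (∑ r : V, XA (Fin n × V) (unionEdges V E n) (k', r) (l, j')) := by
        rw [Finset.sum_eq_single k (fun k2 _ hk2 => P_orth hconn (Ne.symm hk2) l j j')
          (fun hk => absurd (Finset.mem_univ k) hk)]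
    _ = (∑ r : V, XA (Fin n × V) (unionEdges V E n) (k, r) (l, j)) * 1 := by
        rw [← Finset.mul_sum, P_col_total]
    _ = _ := mul_one _

lemma P_const (hconn : ∀ u v : V, Relation.ReflTransGen (Adj V E) u v)
    (k l : Fin n) (j j' : V) :
    (∑ r : V, XA (Fin n × V) (unionEdges V E n) (k, r) (l, j)) =
      ∑ r : V, XA (Fin n × V) (unionEdges V E n) (k, r) (l, j') := by
  have h1 := P_mul_P hconn k l j j'
  have h2 : (∑ r : V, XA (Fin n × V) (unionEdges V E n) (k, r) (l, j)) *
      (∑ r : V, XA (Fin n × V) (unionEdges V E n) (k, r) (l, j')) =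
      ∑ r : V, XA (Fin n × V) (unionEdges V E n) (k, r) (l, j') := by
    calc (∑ r : V, XA (Fin n × V) (unionEdges V E n) (k, r) (l, j)) *
        (∑ r : V, XA (Fin n × V) (unionEdges V E n) (k, r) (l, j'))
        = ∑ k' : Fin n, (∑ r : V, XA (Fin n × V) (unionEdges V E n) (k', r) (l, j)) *
            (∑ r : V, XA (Fin n × V) (unionEdges V E n) (k, r) (l, j')) := by
          rw [Finset.sum_eq_single k (fun k2 _ hk2 => P_orth hconn hk2 l j j')
            (fun hk => absurd (Finset.mem_univ k) hk)]
      _ = 1 * (∑ r : V, XA (Fin n × V) (unionEdges V E n) (k, r) (l, j')) := by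
          rw [← Finset.sum_mul, P_col_total]
      _ = _ := one_mul _
  rw [← h1, h2]

lemma P_row_sum (hconn : ∀ u v : V, Relation.ReflTransGen (Adj V E) u v) [Nonempty V]
    (k : Fin n) (j : V) :
    ∑ l : Fin n, ∑ r : V, XA (Fin n × V) (unionEdges V E n) (k, r) (l, j) = 1 := by
  have hc : ((Fintype.card V : ℂ)) ≠ 0 := Nat.cast_ne_zero.2 Fintype.card_ne_zero
  have e1 : (Fintype.card V : ℂ) •
      (∑ l : Fin n, ∑ r : V, XA (Fin n × V) (unionEdges V E n) (k, r) (l, j)) =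
      ∑ j' : V, ∑ l : Fin n, ∑ r : V, XA (Fin n × V) (unionEdges V E n) (k, r) (l, j') := by
    rw [Finset.sum_congr rfl (fun j' _ => Finset.sum_congr rfl
      (fun l _ => (P_const hconn k l j' j)))]
    rw [Finset.sum_const, Finset.card_univ, Nat.cast_smul_eq_nsmul]
  have e2 : ∑ j' : V, ∑ l : Fin n, ∑ r : V,
      XA (Fin n × V) (unionEdges V E n) (k, r) (l, j') = (Fintype.card V : ℂ) • (1 : _) := by
    rw [Finset.sum_comm]
    rw [Finset.sum_congr rfl (fun l _ => Finset.sum_comm)]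
    rw [Finset.sum_comm]
    calc ∑ r : V, ∑ l : Fin n, ∑ j' : V, XA (Fin n × V) (unionEdges V E n) (k, r) (l, j')
        = ∑ r : V, (1 : AAut (Fin n × V) (unionEdges V E n)) := by
          refine Finset.sum_congr rfl fun r _ => ?_
          exact (Fintype.sum_prod_type
            (f := fun p : Fin n × V => XA (Fin n × V) (unionEdges V E n) (k, r) p)).symm.trans
            (XA_row_sum ((k, r) : Fin n × V))
      _ = (Fintype.card V : ℂ) • (1 : _) := by
          rw [Finset.sum_const, Finset.card_univ, Nat.cast_smul_eq_nsmul]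
  have key := e1.trans e2
  have h3 := congrArg (fun z => (Fintype.card V : ℂ)⁻¹ • z) key
  simpa [inv_smul_smul₀ hc] using h3

lemma P_col_sum (k : Fin n) (j : V) :
    ∑ l : Fin n, ∑ r : V, XA (Fin n × V) (unionEdges V E n) (l, r) (k, j) = 1 :=
  (Fintype.sum_prod_type
    (f := fun p : Fin n × V => XA (Fin n × V) (unionEdges V E n) p (k, j))).symm.trans
    (XA_col_sum ((k, j) : Fin n × V))

lemma U_mul_P (hconn : ∀ u v : V, Relation.ReflTransGen (Adj V E) u v)
    (k l : Fin n) (i j : V) :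
    (∑ l' : Fin n, XA (Fin n × V) (unionEdges V E n) (k, i) (l', j)) *
      (∑ r : V, XA (Fin n × V) (unionEdges V E n) (k, r) (l, j)) =
      XA (Fin n × V) (unionEdges V E n) (k, i) (l, j) := by
  rw [Finset.sum_mul]
  rw [Finset.sum_eq_single l (fun l2 _ hl2 => by
    rw [Finset.mul_sum]
    exact Finset.sum_eq_zero fun r _ => orth1 hconn k i r hl2 j j)
    (fun hl => absurd (Finset.mem_univ l) hl)]
  rw [Finset.mul_sum]
  rw [Finset.sum_congr rfl (fun r _ => XA_col_mul ((l, j) : Fin n × V) (k, i) (k, r))]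
  simp only [Prod.mk.injEq, true_and]
  rw [Finset.sum_ite_eq Finset.univ i (fun r => XA (Fin n × V) (unionEdges V E n) (k, i) (l, j))]
  simp

lemma P_mul_U (hconn : ∀ u v : V, Relation.ReflTransGen (Adj V E) u v)
    (k l : Fin n) (i j : V) :
    (∑ r : V, XA (Fin n × V) (unionEdges V E n) (k, r) (l, j)) *
      (∑ l' : Fin n, XA (Fin n × V) (unionEdges V E n) (k, i) (l', j)) =
      XA (Fin n × V) (unionEdges V E n) (k, i) (l, j) := by
  rw [Finset.mul_sum]
  rw [Finset.sum_eq_single l (fun l2 _ hl2 => by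
    rw [Finset.sum_mul]
    exact Finset.sum_eq_zero fun r _ => orth1 hconn k r i (Ne.symm hl2) j j)
    (fun hl => absurd (Finset.mem_univ l) hl)]
  rw [Finset.sum_mul]
  rw [Finset.sum_congr rfl (fun r _ => XA_col_mul ((l, j) : Fin n × V) (k, r) (k, i))]
  simp only [Prod.mk.injEq, true_and]
  rw [Finset.sum_ite_eq' Finset.univ i
    (fun r => XA (Fin n × V) (unionEdges V E n) (k, r) (l, j))]
  simp

lemma P_edge_mul (m l : Fin n) (γ : V × V) (hγ : γ ∈ E) :
    (∑ r : V, XA (Fin n × V) (unionEdges V E n) (m, r) (l, γ.1)) *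
      (∑ r : V, XA (Fin n × V) (unionEdges V E n) (m, r) (l, γ.2)) =
      ∑ γ' ∈ E, XA (Fin n × V) (unionEdges V E n) (m, γ'.1) (l, γ.1) *
        XA (Fin n × V) (unionEdges V E n) (m, γ'.2) (l, γ.2) := by
  rw [Finset.sum_mul_sum]
  rw [← Fintype.sum_prod_type (f := fun p : V × V =>
    XA (Fin n × V) (unionEdges V E n) (m, p.1) (l, γ.1) *
      XA (Fin n × V) (unionEdges V E n) (m, p.2) (l, γ.2))]
  refine (Finset.sum_subset (Finset.subset_univ E) fun p _ hp => ?_).symm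
  refine XA_r2b ((l, γ.1), (l, γ.2)) (mem_unionEdges_iff.2 ⟨rfl, hγ⟩) (m, p.1) (m, p.2) ?_
  rw [mem_unionEdges_iff]
  rintro ⟨-, h2⟩
  exact hp h2

lemma U_diag (hconn : ∀ u v : V, Relation.ReflTransGen (Adj V E) u v)
    (m : Fin n) (a b a' b' : V) :
    (∑ l : Fin n, XA (Fin n × V) (unionEdges V E n) (m, a) (l, b)) *
      (∑ l : Fin n, XA (Fin n × V) (unionEdges V E n) (m, a') (l, b')) =
      ∑ l : Fin n, XA (Fin n × V) (unionEdges V E n) (m, a) (l, b) *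
        XA (Fin n × V) (unionEdges V E n) (m, a') (l, b') :=
  diag_helper _ _ fun l l' hll => orth1 hconn m a a' hll b b'

lemma Urow (hconn : ∀ u v : V, Relation.ReflTransGen (Adj V E) u v)
    (m : Fin n) (i j k : V) :
    (∑ l : Fin n, XA (Fin n × V) (unionEdges V E n) (m, i) (l, j)) *
      (∑ l : Fin n, XA (Fin n × V) (unionEdges V E n) (m, i) (l, k)) =
      if j = k then ∑ l : Fin n, XA (Fin n × V) (unionEdges V E n) (m, i) (l, j) else 0 := by
  rw [U_diag hconn]
  rcases eq_or_ne j k with rfl | hjk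
  · rw [if_pos rfl]
    refine Finset.sum_congr rfl fun l _ => ?_
    rw [XA_row_mul, if_pos rfl]
  · rw [if_neg hjk]
    refine Finset.sum_eq_zero fun l _ => ?_
    rw [XA_row_mul, if_neg]
    intro hc
    exact hjk (congrArg Prod.snd hc)

lemma Ucol (hconn : ∀ u v : V, Relation.ReflTransGen (Adj V E) u v)
    (m : Fin n) (i j k : V) :
    (∑ l : Fin n, XA (Fin n × V) (unionEdges V E n) (m, j) (l, i)) *
      (∑ l : Fin n, XA (Fin n × V) (unionEdges V E n) (m, k) (l, i)) =
      if j = k then ∑ l : Fin n, XA (Fin n × V) (unionEdges V E n) (m, j) (l, i) else 0 := by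
  rw [U_diag hconn]
  rcases eq_or_ne j k with rfl | hjk
  · rw [if_pos rfl]
    refine Finset.sum_congr rfl fun l _ => ?_
    rw [XA_col_mul, if_pos rfl]
  · rw [if_neg hjk]
    refine Finset.sum_eq_zero fun l _ => ?_
    rw [XA_col_mul, if_neg]
    intro hc
    exact hjk (congrArg Prod.snd hc)

lemma UrowSum (m : Fin n) (i : V) :
    ∑ j : V, ∑ l : Fin n, XA (Fin n × V) (unionEdges V E n) (m, i) (l, j) = 1 := by
  rw [Finset.sum_comm]
  exact (Fintype.sum_prod_type
    (f := fun p : Fin n × V => XA (Fin n × V) (unionEdges V E n) (m, i) p)).symm.trans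
    (XA_row_sum ((m, i) : Fin n × V))

lemma UcolSum (hconn : ∀ u v : V, Relation.ReflTransGen (Adj V E) u v) [Nonempty V]
    (m : Fin n) (j : V) :
    ∑ i : V, ∑ l : Fin n, XA (Fin n × V) (unionEdges V E n) (m, i) (l, j) = 1 := by
  rw [Finset.sum_comm]
  exact P_row_sum hconn m j

lemma U2a (hconn : ∀ u v : V, Relation.ReflTransGen (Adj V E) u v)
    (m : Fin n) (γ : V × V) (hγ : γ ∈ E) (i k : V) (h : (i, k) ∉ E) :
    (∑ l : Fin n, XA (Fin n × V) (unionEdges V E n) (m, γ.1) (l, i)) *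
      (∑ l : Fin n, XA (Fin n × V) (unionEdges V E n) (m, γ.2) (l, k)) = 0 := by
  rw [U_diag hconn]
  refine Finset.sum_eq_zero fun l _ => ?_
  refine XA_r2a ((m, γ.1), (m, γ.2)) (mem_unionEdges_iff.2 ⟨rfl, hγ⟩) (l, i) (l, k) ?_
  rw [mem_unionEdges_iff]
  rintro ⟨-, h2⟩
  exact h h2

lemma U2a' (hconn : ∀ u v : V, Relation.ReflTransGen (Adj V E) u v)
    (m : Fin n) (γ : V × V) (hγ : γ ∈ E) (i k : V) (h : (i, k) ∉ E) :
    (∑ l : Fin n, XA (Fin n × V) (unionEdges V E n) (m, γ.2) (l, k)) *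
      (∑ l : Fin n, XA (Fin n × V) (unionEdges V E n) (m, γ.1) (l, i)) = 0 := by
  rw [U_diag hconn]
  refine Finset.sum_eq_zero fun l _ => ?_
  refine XA_r2a' ((m, γ.1), (m, γ.2)) (mem_unionEdges_iff.2 ⟨rfl, hγ⟩) (l, i) (l, k) ?_
  rw [mem_unionEdges_iff]
  rintro ⟨-, h2⟩
  exact h h2

lemma U2b (hconn : ∀ u v : V, Relation.ReflTransGen (Adj V E) u v)
    (m : Fin n) (γ : V × V) (hγ : γ ∈ E) (i k : V) (h : (i, k) ∉ E) :
    (∑ l : Fin n, XA (Fin n × V) (unionEdges V E n) (m, i) (l, γ.1)) *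
      (∑ l : Fin n, XA (Fin n × V) (unionEdges V E n) (m, k) (l, γ.2)) = 0 := by
  rw [U_diag hconn]
  refine Finset.sum_eq_zero fun l _ => ?_
  refine XA_r2b ((l, γ.1), (l, γ.2)) (mem_unionEdges_iff.2 ⟨rfl, hγ⟩) (m, i) (m, k) ?_
  rw [mem_unionEdges_iff]
  rintro ⟨-, h2⟩
  exact h h2

lemma U2b' (hconn : ∀ u v : V, Relation.ReflTransGen (Adj V E) u v)
    (m : Fin n) (γ : V × V) (hγ : γ ∈ E) (i k : V) (h : (i, k) ∉ E) :
    (∑ l : Fin n, XA (Fin n × V) (unionEdges V E n) (m, k) (l, γ.2)) *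
      (∑ l : Fin n, XA (Fin n × V) (unionEdges V E n) (m, i) (l, γ.1)) = 0 := by
  rw [U_diag hconn]
  refine Finset.sum_eq_zero fun l _ => ?_
  refine XA_r2b' ((l, γ.1), (l, γ.2)) (mem_unionEdges_iff.2 ⟨rfl, hγ⟩) (m, i) (m, k) ?_
  rw [mem_unionEdges_iff]
  rintro ⟨-, h2⟩
  exact h h2

lemma U3 (hconn : ∀ u v : V, Relation.ReflTransGen (Adj V E) u v)
    (m : Fin n) (γ γ' : V × V) (hγ : γ ∈ E) (hγ' : γ' ∈ E) :
    (∑ l : Fin n, XA (Fin n × V) (unionEdges V E n) (m, γ.1) (l, γ'.1)) *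
      (∑ l : Fin n, XA (Fin n × V) (unionEdges V E n) (m, γ.2) (l, γ'.2)) =
      (∑ l : Fin n, XA (Fin n × V) (unionEdges V E n) (m, γ.2) (l, γ'.2)) *
      (∑ l : Fin n, XA (Fin n × V) (unionEdges V E n) (m, γ.1) (l, γ'.1)) := by
  rw [U_diag hconn, U_diag hconn]
  refine Finset.sum_congr rfl fun l _ => ?_
  exact XA_r3 ((m, γ.1), (m, γ.2)) ((l, γ'.1), (l, γ'.2))
    (mem_unionEdges_iff.2 ⟨rfl, hγ⟩) (mem_unionEdges_iff.2 ⟨rfl, hγ'⟩)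

lemma U4a (hconn : ∀ u v : V, Relation.ReflTransGen (Adj V E) u v) [Nonempty V]
    (m : Fin n) (γ : V × V) (hγ : γ ∈ E) :
    ∑ γ' ∈ E, (∑ l : Fin n, XA (Fin n × V) (unionEdges V E n) (m, γ'.1) (l, γ.1)) *
      (∑ l : Fin n, XA (Fin n × V) (unionEdges V E n) (m, γ'.2) (l, γ.2)) = 1 := by
  rw [Finset.sum_congr rfl (fun γ' _ => U_diag hconn m γ'.1 γ.1 γ'.2 γ.2)]
  rw [Finset.sum_comm]
  rw [Finset.sum_congr rfl (fun l _ => (P_edge_mul m l γ hγ).symm)]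
  rw [Finset.sum_congr rfl (fun l _ => P_mul_P hconn m l γ.1 γ.2)]
  exact P_row_sum hconn m γ.1

lemma U4b (hconn : ∀ u v : V, Relation.ReflTransGen (Adj V E) u v)
    (m : Fin n) (γ : V × V) (hγ : γ ∈ E) :
    ∑ γ' ∈ E, (∑ l : Fin n, XA (Fin n × V) (unionEdges V E n) (m, γ.1) (l, γ'.1)) *
      (∑ l : Fin n, XA (Fin n × V) (unionEdges V E n) (m, γ.2) (l, γ'.2)) = 1 := by
  rw [Finset.sum_congr rfl (fun γ' _ => U_diag hconn m γ.1 γ'.1 γ.2 γ'.2)]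
  rw [Finset.sum_comm]
  have h1 := XA_r4b (E := unionEdges V E n) ((m, γ.1), (m, γ.2))
    (mem_unionEdges_iff.2 ⟨rfl, hγ⟩)
  have hinj : ∀ x ∈ Finset.univ ×ˢ E, ∀ y ∈ Finset.univ ×ˢ E,
      (fun p : Fin n × (V × V) => ((p.1, p.2.1), (p.1, p.2.2))) x =
        (fun p : Fin n × (V × V) => ((p.1, p.2.1), (p.1, p.2.2))) y → x = y := by
    rintro ⟨x1, x2, x3⟩ - ⟨y1, y2, y3⟩ - hxy
    simp only [Prod.mk.injEq] at hxy
    obtain ⟨⟨e1, e2⟩, -, e4⟩ := hxy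
    simp [e1, e2, e4]
  rw [unionEdges, Finset.sum_image hinj, Finset.sum_product] at h1
  exact h1

lemma Xrow (hconn : ∀ u v : V, Relation.ReflTransGen (Adj V E) u v)
    (k l l' : Fin n) (j₀ : V) :
    (∑ r : V, XA (Fin n × V) (unionEdges V E n) (k, r) (l, j₀)) *
      (∑ r : V, XA (Fin n × V) (unionEdges V E n) (k, r) (l', j₀)) =
      if l = l' then ∑ r : V, XA (Fin n × V) (unionEdges V E n) (k, r) (l, j₀) else 0 := by
  rcases eq_or_ne l l' with rfl | hll
  · rw [if_pos rfl]
    exact P_mul_P hconn k l j₀ j₀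
  · rw [if_neg hll, Finset.sum_mul_sum]
    exact Finset.sum_eq_zero fun r _ => Finset.sum_eq_zero fun r' _ =>
      orth1 hconn k r r' hll j₀ j₀

lemma Xcol (hconn : ∀ u v : V, Relation.ReflTransGen (Adj V E) u v)
    (k l l' : Fin n) (j₀ : V) :
    (∑ r : V, XA (Fin n × V) (unionEdges V E n) (l, r) (k, j₀)) *
      (∑ r : V, XA (Fin n × V) (unionEdges V E n) (l', r) (k, j₀)) =
      if l = l' then ∑ r : V, XA (Fin n × V) (unionEdges V E n) (l, r) (k, j₀) else 0 := by
  rcases eq_or_ne l l' with rfl | hll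
  · rw [if_pos rfl]
    exact P_mul_P hconn l k j₀ j₀
  · rw [if_neg hll]
    exact P_orth hconn hll k j₀ j₀

lemma CommUP (hconn : ∀ u v : V, Relation.ReflTransGen (Adj V E) u v)
    (k l : Fin n) (i j j₀ : V) :
    (∑ l' : Fin n, XA (Fin n × V) (unionEdges V E n) (k, i) (l', j)) *
      (∑ r : V, XA (Fin n × V) (unionEdges V E n) (k, r) (l, j₀)) =
      (∑ r : V, XA (Fin n × V) (unionEdges V E n) (k, r) (l, j₀)) *
      (∑ l' : Fin n, XA (Fin n × V) (unionEdges V E n) (k, i) (l', j)) := by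
  rw [P_const hconn k l j₀ j, U_mul_P hconn k l i j, P_mul_U hconn k l i j]

end Orth

/-- For a finite connected graph `𝒢 = (V, E)` and `n ≥ 1`, there is an
algebra homomorphism `Ψ : W(𝒢,n) → A_aut(𝒢^{⊔n})` with `Ψ(u^k_{ij}) = Σ_l X_{(k,i),(l,j)}`
and `Ψ(x_{kl}) = Σ_{r∈V} X_{(k,r),(l,j)}` for every `j ∈ V` (the sum being independent of
the choice of `j`). -/
theorem stmt_16 (V : Type) [Fintype V] [DecidableEq V] (E : Finset (V × V))
    (hconn : ∀ u v : V, Relation.ReflTransGen (Adj V E) u v)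
    (n : ℕ) (hn : 1 ≤ n) :
    ∃ Ψ : WAlg V E n →ₐ[ℂ] AAut (Fin n × V) (unionEdges V E n),
      (∀ (k : Fin n) (i j : V),
        Ψ (wu V E n k i j) =
          ∑ l : Fin n, XA (Fin n × V) (unionEdges V E n) (k, i) (l, j)) ∧
      (∀ (k l : Fin n) (j : V),
        Ψ (wxg V E n k l) =
          ∑ r : V, XA (Fin n × V) (unionEdges V E n) (k, r) (l, j)) := by
  rcases isEmpty_or_nonempty V with hV | hV
  · -- degenerate case: `V` is empty, the required identities are vacuous
    refine ⟨RingQuot.liftAlgHom ℂ ⟨FreeAlgebra.lift ℂ (Sum.elim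
      (fun p : Fin n × V × V => isEmptyElim p.2.1)
      (fun p : Fin n × Fin n =>
        if p.1 = p.2 then (1 : AAut (Fin n × V) (unionEdges V E n)) else 0)), ?_⟩,
      fun k i j => isEmptyElim i, fun k l j => isEmptyElim j⟩
    intro x y h
    induction h with
    | u1row m i j k => exact isEmptyElim i
    | u1col m i j k => exact isEmptyElim i
    | u1rowSum m i => exact isEmptyElim i
    | u1colSum m i => exact isEmptyElim i
    | u2a m γ hγ i k h => exact isEmptyElim i
    | u2a' m γ hγ i k h => exact isEmptyElim i
    | u2b m γ hγ i k h => exact isEmptyElim i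
    | u2b' m γ hγ i k h => exact isEmptyElim i
    | u3 m γ γ' hγ hγ' => exact isEmptyElim γ.1
    | u4a m γ hγ => exact isEmptyElim γ.1
    | u4b m γ hγ => exact isEmptyElim γ.1
    | xrow k l l' =>
        simp only [map_mul, FreeAlgebra.lift_ι_apply, Sum.elim_inr, apply_ite, map_zero,
          map_one]
        split_ifs <;> simp_all
    | xcol k l l' =>
        simp only [map_mul, FreeAlgebra.lift_ι_apply, Sum.elim_inr, apply_ite, map_zero,
          map_one]
        split_ifs <;> simp_all
    | xrowSum k =>
        simp only [map_sum, FreeAlgebra.lift_ι_apply, Sum.elim_inr, map_one]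
        simp
    | xcolSum k =>
        simp only [map_sum, FreeAlgebra.lift_ι_apply, Sum.elim_inr, map_one]
        simp
    | comm k l i j => exact isEmptyElim i
  · -- main case: `V` is nonempty
    have j₀ : V := Classical.arbitrary V
    refine ⟨RingQuot.liftAlgHom ℂ ⟨FreeAlgebra.lift ℂ (Sum.elim
      (fun p : Fin n × V × V =>
        ∑ l : Fin n, XA (Fin n × V) (unionEdges V E n) (p.1, p.2.1) (l, p.2.2))
      (fun p : Fin n × Fin n =>
        ∑ r : V, XA (Fin n × V) (unionEdges V E n) (p.1, r) (p.2, j₀))), ?_⟩, ?_, ?_⟩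
    · intro x y h
      induction h with
      | u1row m i j k =>
          simp only [map_mul, FreeAlgebra.lift_ι_apply, Sum.elim_inl]
          rw [Urow hconn m i j k]
          split_ifs <;> simp
      | u1col m i j k =>
          simp only [map_mul, FreeAlgebra.lift_ι_apply, Sum.elim_inl]
          rw [Ucol hconn m i j k]
          split_ifs <;> simp
      | u1rowSum m i =>
          simp only [map_sum, FreeAlgebra.lift_ι_apply, Sum.elim_inl, map_one]
          exact UrowSum m i
      | u1colSum m i =>
          simp only [map_sum, FreeAlgebra.lift_ι_apply, Sum.elim_inl, map_one]
          exact UcolSum hconn m i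
      | u2a m γ hγ i k h =>
          simp only [map_mul, FreeAlgebra.lift_ι_apply, Sum.elim_inl, map_zero]
          exact U2a hconn m γ hγ i k h
      | u2a' m γ hγ i k h =>
          simp only [map_mul, FreeAlgebra.lift_ι_apply, Sum.elim_inl, map_zero]
          exact U2a' hconn m γ hγ i k h
      | u2b m γ hγ i k h =>
          simp only [map_mul, FreeAlgebra.lift_ι_apply, Sum.elim_inl, map_zero]
          exact U2b hconn m γ hγ i k h
      | u2b' m γ hγ i k h =>
          simp only [map_mul, FreeAlgebra.lift_ι_apply, Sum.elim_inl, map_zero]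
          exact U2b' hconn m γ hγ i k h
      | u3 m γ γ' hγ hγ' =>
          simp only [map_mul, FreeAlgebra.lift_ι_apply, Sum.elim_inl]
          exact U3 hconn m γ γ' hγ hγ'
      | u4a m γ hγ =>
          simp only [map_sum, map_mul, FreeAlgebra.lift_ι_apply, Sum.elim_inl, map_one]
          exact U4a hconn m γ hγ
      | u4b m γ hγ =>
          simp only [map_sum, map_mul, FreeAlgebra.lift_ι_apply, Sum.elim_inl, map_one]
          exact U4b hconn m γ hγ
      | xrow k l l' =>
          simp only [map_mul, FreeAlgebra.lift_ι_apply, Sum.elim_inr]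
          rw [Xrow hconn k l l' j₀]
          split_ifs <;> simp
      | xcol k l l' =>
          simp only [map_mul, FreeAlgebra.lift_ι_apply, Sum.elim_inr]
          rw [Xcol hconn k l l' j₀]
          split_ifs <;> simp
      | xrowSum k =>
          simp only [map_sum, FreeAlgebra.lift_ι_apply, Sum.elim_inr, map_one]
          exact P_row_sum hconn k j₀
      | xcolSum k =>
          simp only [map_sum, FreeAlgebra.lift_ι_apply, Sum.elim_inr, map_one]
          exact P_col_sum k j₀
      | comm k l i j =>
          simp only [map_mul, FreeAlgebra.lift_ι_apply, Sum.elim_inl, Sum.elim_inr]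
          exact CommUP hconn k l i j j₀
    · intro k i j
      simp only [wu, RingQuot.liftAlgHom_mkAlgHom_apply, FreeAlgebra.lift_ι_apply,
        Sum.elim_inl]
    · intro k l j
      simp only [wxg, RingQuot.liftAlgHom_mkAlgHom_apply, FreeAlgebra.lift_ι_apply,
        Sum.elim_inr]
      exact P_const hconn k l j₀ j
end
end

section
/- Let m ≥ 1 and n ≥ 1, and let 𝒫_m be the polygonal (directed cycle) graph with vertex set {1,…,m} and edge set {(1,2),(2,3),…,(m−1,m),(m,1)}. Then the ℂ-algebra A_aut(𝒫_m^{⊔n}) is isomorphic to 𝒜_n(ℤ/mℤ), the universal unital ℂ-algebra with generators a_{ij}(g) (1 ≤ i,j ≤ n, g ∈ ℤ/mℤ) and relations a_{ij}(g)a_{ik}(h) = δ_{jk}a_{ij}(g+h), a_{ji}(g)a_{ki}(h) = δ_{jk}a_{ji}(g+h), Σ_{l=1}^n a_{il}(0) = 1 = Σ_{l=1}^n a_{li}(0). -/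
noncomputable section

/-- Relations of the universal algebra `𝒜_n(ℤ/mℤ)` (the cyclic group written additively). -/
inductive AnZRel (m n : ℕ) :
    FreeAlgebra ℂ (Fin n × Fin n × ZMod m) → FreeAlgebra ℂ (Fin n × Fin n × ZMod m) → Prop
  | row (i j k : Fin n) (g h : ZMod m) :
      AnZRel m n (FreeAlgebra.ι ℂ (i, j, g) * FreeAlgebra.ι ℂ (i, k, h))
        (if j = k then FreeAlgebra.ι ℂ (i, j, g + h) else 0)
  | col (i j k : Fin n) (g h : ZMod m) :
      AnZRel m n (FreeAlgebra.ι ℂ (j, i, g) * FreeAlgebra.ι ℂ (k, i, h))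
        (if j = k then FreeAlgebra.ι ℂ (j, i, g + h) else 0)
  | rowSum (i : Fin n) : AnZRel m n (∑ l : Fin n, FreeAlgebra.ι ℂ (i, l, (0 : ZMod m))) 1
  | colSum (i : Fin n) : AnZRel m n (∑ l : Fin n, FreeAlgebra.ι ℂ (l, i, (0 : ZMod m))) 1

/-- The universal algebra `𝒜_n(ℤ/mℤ)`. -/
abbrev AnZ (m n : ℕ) : Type := RingQuot (AnZRel m n)

/-- The edge set of the polygonal (directed cycle) graph `𝒫_m` on the vertex set
`ℤ/mℤ`: the edges are `(v, v+1)`. -/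
def polyEdges (m : ℕ) [NeZero m] : Finset (ZMod m × ZMod m) :=
  Finset.univ.image fun v : ZMod m => (v, v + 1)

set_option linter.unusedSectionVars false

namespace Stmt19

open Finset

section GraphGeneral

variable {V : Type} [Fintype V] [DecidableEq V] {E : Finset (V × V)}

lemma XA_mul_row (p q r : V) :
    XA V E p q * XA V E p r = if q = r then XA V E p q else 0 := by
  have h := RingQuot.mkAlgHom_rel ℂ (GraphRel.r1row (E := E) p q r)
  simpa [XA, map_mul, apply_ite (RingQuot.mkAlgHom ℂ (GraphRel V E))] using h

lemma XA_mul_col (p q r : V) :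
    XA V E q p * XA V E r p = if q = r then XA V E q p else 0 := by
  have h := RingQuot.mkAlgHom_rel ℂ (GraphRel.r1col (E := E) p q r)
  simpa [XA, map_mul, apply_ite (RingQuot.mkAlgHom ℂ (GraphRel V E))] using h

lemma XA_rowSum (p : V) : ∑ q : V, XA V E p q = 1 := by
  have h := RingQuot.mkAlgHom_rel ℂ (GraphRel.r1rowSum (E := E) p)
  simpa [XA, map_sum] using h

lemma XA_colSum (p : V) : ∑ q : V, XA V E q p = 1 := by
  have h := RingQuot.mkAlgHom_rel ℂ (GraphRel.r1colSum (E := E) p)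
  simpa [XA, map_sum] using h

lemma XA_r2a {γ : V × V} (hγ : γ ∈ E) {i k : V} (h : (i, k) ∉ E) :
    XA V E γ.1 i * XA V E γ.2 k = 0 := by
  have h' := RingQuot.mkAlgHom_rel ℂ (GraphRel.r2a γ hγ i k h)
  simpa [XA, map_mul] using h'

lemma XA_r2a' {γ : V × V} (hγ : γ ∈ E) {i k : V} (h : (i, k) ∉ E) :
    XA V E γ.2 k * XA V E γ.1 i = 0 := by
  have h' := RingQuot.mkAlgHom_rel ℂ (GraphRel.r2a' γ hγ i k h)
  simpa [XA, map_mul] using h'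

lemma XA_r3 {γ γ' : V × V} (hγ : γ ∈ E) (hγ' : γ' ∈ E) :
    XA V E γ.1 γ'.1 * XA V E γ.2 γ'.2 = XA V E γ.2 γ'.2 * XA V E γ.1 γ'.1 := by
  have h' := RingQuot.mkAlgHom_rel ℂ (GraphRel.r3 γ γ' hγ hγ')
  simpa [XA, map_mul] using h'

lemma XA_r4a {γ : V × V} (hγ : γ ∈ E) :
    ∑ γ' ∈ E, XA V E γ'.1 γ.1 * XA V E γ'.2 γ.2 = 1 := by
  have h' := RingQuot.mkAlgHom_rel ℂ (GraphRel.r4a γ hγ)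
  simpa [XA, map_sum, map_mul] using h'

lemma XA_r4b {γ : V × V} (hγ : γ ∈ E) :
    ∑ γ' ∈ E, XA V E γ.1 γ'.1 * XA V E γ.2 γ'.2 = 1 := by
  have h' := RingQuot.mkAlgHom_rel ℂ (GraphRel.r4b γ hγ)
  simpa [XA, map_sum, map_mul] using h'

end GraphGeneral

end Stmt19
namespace Stmt19

open Finset

section Poly

variable {m n : ℕ} [NeZero m]

lemma mem_unionEdges {γ : (Fin n × ZMod m) × (Fin n × ZMod m)} :
    γ ∈ unionEdges (ZMod m) (polyEdges m) n ↔ γ.2.1 = γ.1.1 ∧ γ.2.2 = γ.1.2 + 1 := by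
  obtain ⟨⟨p, a⟩, ⟨q, b⟩⟩ := γ
  simp only [unionEdges, polyEdges, mem_image, mem_product, mem_univ, true_and, Prod.ext_iff]
  constructor
  · rintro ⟨⟨r, ⟨x, y⟩⟩, ⟨v, hv1, hv2⟩, ⟨h1, h2⟩, h3, h4⟩
    exact ⟨h3.symm.trans h1, by rw [← h4, ← hv2, hv1, h2]⟩
  · rintro ⟨h1, h2⟩
    exact ⟨⟨_, a, a + 1⟩, ⟨a, rfl, rfl⟩, ⟨rfl, rfl⟩, h1.symm, by rw [h2]⟩

lemma edge_mem (j : Fin n) (a : ZMod m) :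
    ((j, a), (j, a + 1)) ∈ unionEdges (ZMod m) (polyEdges m) n :=
  mem_unionEdges.2 ⟨rfl, rfl⟩

lemma sum_unionEdges {M : Type*} [AddCommMonoid M]
    (f : ((Fin n × ZMod m) × (Fin n × ZMod m)) → M) :
    ∑ γ ∈ unionEdges (ZMod m) (polyEdges m) n, f γ
      = ∑ p : Fin n, ∑ c : ZMod m, f ((p, c), (p, c + 1)) := by
  rw [unionEdges, Finset.sum_image]
  · rw [Finset.sum_product]
    congr 1
    ext p
    rw [polyEdges, Finset.sum_image]
    intro x _ y _ h
    exact (Prod.ext_iff.1 h).1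
  · rintro ⟨p, x, y⟩ _ ⟨q, z, w⟩ _ h
    simp only [Prod.ext_iff] at h
    obtain ⟨⟨h1, h2⟩, _, h3⟩ := h
    subst h1 h2 h3
    rfl

/-- The generator `X_{(i,a),(j,v)}` of `A_aut(𝒫_m^{⊔n})`. -/
def XX (m n : ℕ) [NeZero m] (i : Fin n) (a : ZMod m) (j : Fin n) (v : ZMod m) :
    AAut (Fin n × ZMod m) (unionEdges (ZMod m) (polyEdges m) n) :=
  XA _ _ (i, a) (j, v)

lemma shift_one (j : Fin n) (a : ZMod m) (i : Fin n) (v : ZMod m) :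
    XX m n j a i v = XX m n j (a + 1) i (v + 1) := by
  have hA : XX m n j a i v = XX m n j a i v * XX m n j (a + 1) i (v + 1) := by
    calc XX m n j a i v = XX m n j a i v * 1 := (mul_one _).symm
    _ = ∑ q : Fin n × ZMod m, XX m n j a i v * XA _ _ (j, a + 1) q := by
        rw [← XA_rowSum ((j, a + 1) : Fin n × ZMod m), Finset.mul_sum]
    _ = XX m n j a i v * XX m n j (a + 1) i (v + 1) := by
        have hz : ∀ q : Fin n × ZMod m, q ≠ (i, v + 1) →
            XX m n j a i v * XA _ _ (j, a + 1) q = 0 := by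
          intro q hq
          refine XA_r2a (γ := ((j, a), (j, a + 1))) (edge_mem j a) ?_
          intro hc
          have h2 := mem_unionEdges.1 hc
          exact hq (Prod.ext h2.1 h2.2)
        exact Fintype.sum_eq_single _ hz
  have hA' : XX m n j (a + 1) i (v + 1)
      = XX m n j (a + 1) i (v + 1) * XX m n j a i v := by
    calc XX m n j (a + 1) i (v + 1) = XX m n j (a + 1) i (v + 1) * 1 := (mul_one _).symm
    _ = ∑ q : Fin n × ZMod m, XX m n j (a + 1) i (v + 1) * XA _ _ (j, a) q := by
        rw [← XA_rowSum ((j, a) : Fin n × ZMod m), Finset.mul_sum]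
    _ = XX m n j (a + 1) i (v + 1) * XX m n j a i v := by
        have hz : ∀ q : Fin n × ZMod m, q ≠ (i, v) →
            XX m n j (a + 1) i (v + 1) * XA _ _ (j, a) q = 0 := by
          intro q hq
          refine XA_r2a' (γ := ((j, a), (j, a + 1))) (edge_mem j a)
            (i := q) (k := (i, v + 1)) ?_
          intro hc
          have h2 := mem_unionEdges.1 hc
          obtain ⟨q1, q2⟩ := q
          simp only at h2
          apply hq
          have hq2 : q2 = v := add_right_cancel h2.2.symm
          exact Prod.ext h2.1.symm hq2
        exact Fintype.sum_eq_single _ hz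
  have hc : XX m n j a i v * XX m n j (a + 1) i (v + 1)
      = XX m n j (a + 1) i (v + 1) * XX m n j a i v :=
    XA_r3 (γ := ((j, a), (j, a + 1))) (γ' := ((i, v), (i, v + 1)))
      (edge_mem j a) (edge_mem i v)
  rw [hA, hc, ← hA']

lemma shift_add (j : Fin n) (a : ZMod m) (i : Fin n) (v : ZMod m) (c : ZMod m) :
    XX m n j a i v = XX m n j (a + c) i (v + c) := by
  have key : ∀ t : ℕ, XX m n j a i v = XX m n j (a + t) i (v + t) := by
    intro t
    induction t with
    | zero => simp
    | succ t ih =>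
      rw [ih, shift_one]
      push_cast
      ring_nf
  have := key c.val
  rwa [ZMod.natCast_val, ZMod.cast_id] at this

lemma Xcol0 (j k i : Fin n) (v w : ZMod m) :
    XX m n j 0 i v * XX m n k 0 i w
      = if j = k ∧ v = w then XX m n j 0 i v else 0 := by
  have h1 : XX m n j 0 i v = XX m n j (w - v) i w := by
    simpa using shift_add j 0 i v (w - v)
  by_cases h : j = k ∧ v = w
  · obtain ⟨rfl, rfl⟩ := h
    rw [if_pos ⟨rfl, rfl⟩]
    have h2 := XA_mul_col (E := unionEdges (ZMod m) (polyEdges m) n)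
      ((i, v) : Fin n × ZMod m) ((j, (0 : ZMod m))) ((j, (0 : ZMod m)))
    simpa [XX] using h2
  · rw [if_neg h, h1, XX, XX, XA_mul_col, if_neg]
    intro hc
    rw [Prod.mk.injEq] at hc
    exact h ⟨hc.1, (sub_eq_zero.1 hc.2).symm⟩

end Poly

end Stmt19
namespace Stmt19

open Finset

section AnZSide

variable {m n : ℕ} [NeZero m]

/-- The standard additive character of `ZMod m`. -/
noncomputable def χ (m : ℕ) [NeZero m] : AddChar (ZMod m) ℂ := ZMod.stdAddChar

lemma sum_χ' (k : ZMod m) : ∑ v : ZMod m, χ m (v * k) = if k = 0 then (m : ℂ) else 0 := by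
  have h := AddChar.sum_mulShift (ψ := ZMod.stdAddChar (N := m)) k
    (ZMod.isPrimitive_stdAddChar m)
  simpa [χ, ZMod.card] using h

lemma sum_χ (k : ZMod m) : ∑ v : ZMod m, χ m (k * v) = if k = 0 then (m : ℂ) else 0 := by
  simp_rw [mul_comm k]
  exact sum_χ' k

lemma hm0 : (m : ℂ) ≠ 0 := Nat.cast_ne_zero.2 (NeZero.ne m)

/-- The generators `a_{ij}(g)` of `𝒜_n(ℤ/mℤ)`. -/
def Amk (m n : ℕ) (i j : Fin n) (g : ZMod m) : AnZ m n :=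
  RingQuot.mkAlgHom ℂ (AnZRel m n) (FreeAlgebra.ι ℂ (i, j, g))

lemma A_row (i j k : Fin n) (g h : ZMod m) :
    Amk m n i j g * Amk m n i k h = if j = k then Amk m n i j (g + h) else 0 := by
  have h' := RingQuot.mkAlgHom_rel ℂ (AnZRel.row (m := m) (n := n) i j k g h)
  simpa [Amk, map_mul, apply_ite (RingQuot.mkAlgHom ℂ (AnZRel m n))] using h'

lemma A_col (i j k : Fin n) (g h : ZMod m) :
    Amk m n j i g * Amk m n k i h = if j = k then Amk m n j i (g + h) else 0 := by
  have h' := RingQuot.mkAlgHom_rel ℂ (AnZRel.col (m := m) (n := n) i j k g h)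
  simpa [Amk, map_mul, apply_ite (RingQuot.mkAlgHom ℂ (AnZRel m n))] using h'

lemma A_rowSum (i : Fin n) : ∑ l : Fin n, Amk m n i l 0 = 1 := by
  have h' := RingQuot.mkAlgHom_rel ℂ (AnZRel.rowSum (m := m) (n := n) i)
  simpa [Amk, map_sum] using h'

lemma A_colSum (i : Fin n) : ∑ l : Fin n, Amk m n l i 0 = 1 := by
  have h' := RingQuot.mkAlgHom_rel ℂ (AnZRel.colSum (m := m) (n := n) i)
  simpa [Amk, map_sum] using h'

/-- The Fourier transforms `Ψ_{ij}(d) = m⁻¹ ∑_g χ(gd) a_{ij}(g)`; the image of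
`X_{(i,a),(j,v)}` (`d = v - a`) under the isomorphism. -/
noncomputable def Ψ (m n : ℕ) [NeZero m] (i j : Fin n) (d : ZMod m) : AnZ m n :=
  (m : ℂ)⁻¹ • ∑ g : ZMod m, χ m (g * d) • Amk m n i j g

/-- The key convolution computation. -/
lemma conv {F G B : ZMod m → AnZ m n} (hmul : ∀ g h, F g * G h = B (g + h)) (d e : ZMod m) :
    ((m : ℂ)⁻¹ • ∑ g : ZMod m, χ m (g * d) • F g) *
        ((m : ℂ)⁻¹ • ∑ h : ZMod m, χ m (h * e) • G h)
      = if d = e then (m : ℂ)⁻¹ • ∑ s : ZMod m, χ m (s * e) • B s else 0 := by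
  have key : (∑ g : ZMod m, χ m (g * d) • F g) * (∑ h : ZMod m, χ m (h * e) • G h)
      = (if d = e then (m : ℂ) else 0) • ∑ s : ZMod m, χ m (s * e) • B s := by
    rw [Finset.sum_mul_sum]
    have step1 : ∀ g : ZMod m,
        ∑ h : ZMod m, (χ m (g * d) • F g) * (χ m (h * e) • G h)
          = ∑ s : ZMod m, (χ m (s * e) * χ m (g * (d - e))) • B s := by
      intro g
      refine Fintype.sum_equiv (Equiv.addLeft g) _ _ ?_
      intro h
      simp only [Equiv.coe_addLeft]
      rw [smul_mul_smul_comm, hmul]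
      congr 1
      rw [← AddChar.map_add_eq_mul, ← AddChar.map_add_eq_mul]
      congr 1
      ring
    calc ∑ g : ZMod m, ∑ h : ZMod m, (χ m (g * d) • F g) * (χ m (h * e) • G h)
        = ∑ g : ZMod m, ∑ s : ZMod m, (χ m (s * e) * χ m (g * (d - e))) • B s := by
          exact Finset.sum_congr rfl fun g _ => step1 g
      _ = ∑ s : ZMod m, ∑ g : ZMod m, (χ m (s * e) * χ m (g * (d - e))) • B s :=
          Finset.sum_comm
      _ = (if d = e then (m : ℂ) else 0) • ∑ s : ZMod m, χ m (s * e) • B s := by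
          rw [Finset.smul_sum]
          refine Finset.sum_congr rfl fun s _ => ?_
          rw [← Finset.sum_smul, ← Finset.mul_sum, sum_χ', smul_smul]
          congr 1
          by_cases hde : d = e
          · rw [if_pos (by rw [hde, sub_self]), if_pos hde]
            ring
          · rw [if_neg (fun hc => hde (sub_eq_zero.1 hc)), if_neg hde]
            ring
  rw [smul_mul_smul_comm, key, smul_smul]
  split_ifs with hde
  · congr 1
    rw [mul_assoc, inv_mul_cancel₀ hm0, mul_one]
  · simp

lemma Ψ_mul_row (i j k : Fin n) (d e : ZMod m) :
    Ψ m n i j d * Ψ m n i k e = if j = k ∧ d = e then Ψ m n i j d else 0 := by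
  have hmul : ∀ g h : ZMod m,
      Amk m n i j g * Amk m n i k h
        = if j = k then Amk m n i j (g + h) else 0 := fun g h => A_row i j k g h
  rw [Ψ, Ψ]
  rw [conv (B := fun s => if j = k then Amk m n i j s else 0) hmul]
  by_cases hde : d = e
  · subst hde
    by_cases hjk : j = k
    · simp [hjk, Ψ]
    · simp [hjk]
  · rw [if_neg hde, if_neg (fun hc => hde hc.2)]

lemma Ψ_mul_col (i j k : Fin n) (d e : ZMod m) :
    Ψ m n j i d * Ψ m n k i e = if j = k ∧ d = e then Ψ m n j i d else 0 := by
  have hmul : ∀ g h : ZMod m,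
      Amk m n j i g * Amk m n k i h
        = if j = k then Amk m n j i (g + h) else 0 := fun g h => A_col i j k g h
  rw [Ψ, Ψ]
  rw [conv (B := fun s => if j = k then Amk m n j i s else 0) hmul]
  by_cases hde : d = e
  · subst hde
    by_cases hjk : j = k
    · simp [hjk, Ψ]
    · simp [hjk]
  · rw [if_neg hde, if_neg (fun hc => hde hc.2)]

lemma Ψ_sum_d (i j : Fin n) : ∑ d : ZMod m, Ψ m n i j d = Amk m n i j 0 := by
  simp only [Ψ]
  rw [← Finset.smul_sum, Finset.sum_comm]
  have h1 : ∀ g : ZMod m, ∑ d : ZMod m, χ m (g * d) • Amk m n i j g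
      = if g = 0 then (m : ℂ) • Amk m n i j g else 0 := by
    intro g
    rw [← Finset.sum_smul, sum_χ, ite_smul, zero_smul]
  calc (m : ℂ)⁻¹ • ∑ g : ZMod m, ∑ d : ZMod m, χ m (g * d) • Amk m n i j g
      = (m : ℂ)⁻¹ • ∑ g : ZMod m, if g = 0 then (m : ℂ) • Amk m n i j g else 0 := by
        rw [Finset.sum_congr rfl fun g _ => h1 g]
    _ = Amk m n i j 0 := by
        rw [Finset.sum_ite_eq' Finset.univ (0 : ZMod m) (fun g => (m : ℂ) • Amk m n i j g)]
        simp [smul_smul, inv_mul_cancel₀ (hm0 (m := m))]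

lemma Ψ_rowSum (i : Fin n) : ∑ j : Fin n, ∑ d : ZMod m, Ψ m n i j d = 1 := by
  calc ∑ j : Fin n, ∑ d : ZMod m, Ψ m n i j d = ∑ j : Fin n, Amk m n i j 0 :=
        Finset.sum_congr rfl fun j _ => Ψ_sum_d i j
    _ = 1 := A_rowSum i

lemma Ψ_colSum (i : Fin n) : ∑ j : Fin n, ∑ d : ZMod m, Ψ m n j i d = 1 := by
  calc ∑ j : Fin n, ∑ d : ZMod m, Ψ m n j i d = ∑ j : Fin n, Amk m n j i 0 :=
        Finset.sum_congr rfl fun j _ => Ψ_sum_d j i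
    _ = 1 := A_colSum i

end AnZSide

end Stmt19
namespace Stmt19

open Finset

section PsiHom

variable {m n : ℕ} [NeZero m]

noncomputable def ψf (m n : ℕ) [NeZero m] :
    FreeAlgebra ℂ ((Fin n × ZMod m) × (Fin n × ZMod m)) →ₐ[ℂ] AnZ m n :=
  FreeAlgebra.lift ℂ (fun p => Ψ m n p.1.1 p.2.1 (p.2.2 - p.1.2))

lemma ψf_ι (i : Fin n) (a : ZMod m) (j : Fin n) (v : ZMod m) :
    ψf m n (FreeAlgebra.ι ℂ ((i, a), (j, v))) = Ψ m n i j (v - a) := by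
  simp [ψf]

lemma ψ_rel {x y : FreeAlgebra ℂ ((Fin n × ZMod m) × (Fin n × ZMod m))}
    (h : GraphRel (Fin n × ZMod m) (unionEdges (ZMod m) (polyEdges m) n) x y) :
    ψf m n x = ψf m n y := by
  cases h with
  | r1row i j k =>
    obtain ⟨i, a⟩ := i; obtain ⟨j, v⟩ := j; obtain ⟨k, w⟩ := k
    rw [map_mul, ψf_ι, ψf_ι, Ψ_mul_row, apply_ite (ψf m n), map_zero, ψf_ι]
    refine if_congr ?_ rfl rfl
    simp [Prod.ext_iff, sub_left_inj]
  | r1col i j k =>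
    obtain ⟨i, v⟩ := i; obtain ⟨j, a⟩ := j; obtain ⟨k, b⟩ := k
    rw [map_mul, ψf_ι, ψf_ι, Ψ_mul_col, apply_ite (ψf m n), map_zero, ψf_ι]
    refine if_congr ?_ rfl rfl
    simp [Prod.ext_iff, sub_right_inj]
  | r1rowSum i =>
    obtain ⟨i, a⟩ := i
    rw [map_sum, map_one]
    calc ∑ l : Fin n × ZMod m, ψf m n (FreeAlgebra.ι ℂ ((i, a), l))
        = ∑ j : Fin n, ∑ v : ZMod m, Ψ m n i j (v - a) := by
          rw [Fintype.sum_prod_type]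
          exact Finset.sum_congr rfl fun j _ => Finset.sum_congr rfl fun v _ => ψf_ι i a j v
      _ = ∑ j : Fin n, ∑ d : ZMod m, Ψ m n i j d := by
          refine Finset.sum_congr rfl fun j _ => ?_
          exact Fintype.sum_equiv (Equiv.subRight a) _ _ fun v => rfl
      _ = 1 := Ψ_rowSum i
  | r1colSum i =>
    obtain ⟨i, v⟩ := i
    rw [map_sum, map_one]
    calc ∑ l : Fin n × ZMod m, ψf m n (FreeAlgebra.ι ℂ (l, (i, v)))
        = ∑ j : Fin n, ∑ a : ZMod m, Ψ m n j i (v - a) := by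
          rw [Fintype.sum_prod_type]
          exact Finset.sum_congr rfl fun j _ => Finset.sum_congr rfl fun a _ => ψf_ι j a i v
      _ = ∑ j : Fin n, ∑ d : ZMod m, Ψ m n j i d := by
          refine Finset.sum_congr rfl fun j _ => ?_
          exact Fintype.sum_equiv (Equiv.subLeft v) _ _ fun a => rfl
      _ = 1 := Ψ_colSum i
  | r2a γ hγ i k h =>
    obtain ⟨⟨p, c⟩, ⟨p', c'⟩⟩ := γ
    obtain ⟨h1, h2⟩ := mem_unionEdges.1 hγ
    simp only at h1 h2; subst h1 h2
    obtain ⟨j, v⟩ := i; obtain ⟨j', w⟩ := k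
    rw [map_mul, map_zero, ψf_ι, ψf_ι, Ψ_mul_row, if_neg]
    rintro ⟨rfl, h4⟩
    exact h (mem_unionEdges.2 ⟨rfl, by linear_combination -h4⟩)
  | r2a' γ hγ i k h =>
    obtain ⟨⟨p, c⟩, ⟨p', c'⟩⟩ := γ
    obtain ⟨h1, h2⟩ := mem_unionEdges.1 hγ
    simp only at h1 h2; subst h1 h2
    obtain ⟨j, v⟩ := i; obtain ⟨j', w⟩ := k
    rw [map_mul, map_zero, ψf_ι, ψf_ι, Ψ_mul_row, if_neg]
    rintro ⟨h3, h4⟩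
    exact h (mem_unionEdges.2 ⟨h3, by linear_combination h4⟩)
  | r2b γ hγ i k h =>
    obtain ⟨⟨p, c⟩, ⟨p', c'⟩⟩ := γ
    obtain ⟨h1, h2⟩ := mem_unionEdges.1 hγ
    simp only at h1 h2; subst h1 h2
    obtain ⟨j, a⟩ := i; obtain ⟨j', b⟩ := k
    rw [map_mul, map_zero, ψf_ι, ψf_ι, Ψ_mul_col, if_neg]
    rintro ⟨rfl, h4⟩
    exact h (mem_unionEdges.2 ⟨rfl, by linear_combination h4⟩)
  | r2b' γ hγ i k h =>
    obtain ⟨⟨p, c⟩, ⟨p', c'⟩⟩ := γ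
    obtain ⟨h1, h2⟩ := mem_unionEdges.1 hγ
    simp only at h1 h2; subst h1 h2
    obtain ⟨j, a⟩ := i; obtain ⟨j', b⟩ := k
    rw [map_mul, map_zero, ψf_ι, ψf_ι, Ψ_mul_col, if_neg]
    rintro ⟨h3, h4⟩
    exact h (mem_unionEdges.2 ⟨h3, by linear_combination -h4⟩)
  | r3 γ γ' hγ hγ' =>
    obtain ⟨⟨p, c⟩, ⟨p2, c2⟩⟩ := γ
    obtain ⟨h1, h2⟩ := mem_unionEdges.1 hγ
    simp only at h1 h2; subst h1 h2
    obtain ⟨⟨q, d⟩, ⟨q2, d2⟩⟩ := γ'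
    obtain ⟨h3, h4⟩ := mem_unionEdges.1 hγ'
    simp only at h3 h4; subst h3 h4
    rw [map_mul, map_mul, ψf_ι, ψf_ι]
    have he : d + 1 - (c + 1) = d - c := by ring
    rw [he]
  | r4a γ hγ =>
    obtain ⟨⟨q1, d⟩, ⟨q, d2⟩⟩ := γ
    obtain ⟨h1, h2⟩ := mem_unionEdges.1 hγ
    simp only at h1 h2; subst h1 h2
    rw [map_sum, map_one]
    calc ∑ γ' ∈ unionEdges (ZMod m) (polyEdges m) n,
          ψf m n (FreeAlgebra.ι ℂ (γ'.1, (q, d)) * FreeAlgebra.ι ℂ (γ'.2, (q, d + 1)))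
        = ∑ p : Fin n, ∑ c : ZMod m, Ψ m n p q (d - c) := by
          rw [sum_unionEdges]
          refine Finset.sum_congr rfl fun p _ => Finset.sum_congr rfl fun c _ => ?_
          rw [map_mul, ψf_ι, ψf_ι]
          have he : d + 1 - (c + 1) = d - c := by ring
          rw [he, Ψ_mul_row, if_pos ⟨rfl, rfl⟩]
      _ = ∑ p : Fin n, ∑ e : ZMod m, Ψ m n p q e := by
          refine Finset.sum_congr rfl fun p _ => ?_
          exact Fintype.sum_equiv (Equiv.subLeft d) _ _ fun c => rfl
      _ = 1 := Ψ_colSum q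
  | r4b γ hγ =>
    obtain ⟨⟨q1, d⟩, ⟨q, d2⟩⟩ := γ
    obtain ⟨h1, h2⟩ := mem_unionEdges.1 hγ
    simp only at h1 h2; subst h1 h2
    rw [map_sum, map_one]
    calc ∑ γ' ∈ unionEdges (ZMod m) (polyEdges m) n,
          ψf m n (FreeAlgebra.ι ℂ ((q, d), γ'.1) * FreeAlgebra.ι ℂ ((q, d + 1), γ'.2))
        = ∑ p : Fin n, ∑ c : ZMod m, Ψ m n q p (c - d) := by
          rw [sum_unionEdges]
          refine Finset.sum_congr rfl fun p _ => Finset.sum_congr rfl fun c _ => ?_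
          rw [map_mul, ψf_ι, ψf_ι]
          have he : c + 1 - (d + 1) = c - d := by ring
          rw [he, Ψ_mul_row, if_pos ⟨rfl, rfl⟩]
      _ = ∑ p : Fin n, ∑ e : ZMod m, Ψ m n q p e := by
          refine Finset.sum_congr rfl fun p _ => ?_
          exact Fintype.sum_equiv (Equiv.subRight d) _ _ fun c => rfl
      _ = 1 := Ψ_rowSum q

noncomputable def ψA (m n : ℕ) [NeZero m] :
    AAut (Fin n × ZMod m) (unionEdges (ZMod m) (polyEdges m) n) →ₐ[ℂ] AnZ m n :=
  RingQuot.liftAlgHom ℂ ⟨ψf m n, fun _ _ h => ψ_rel h⟩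

lemma ψA_XX (i : Fin n) (a : ZMod m) (j : Fin n) (v : ZMod m) :
    ψA m n (XX m n i a j v) = Ψ m n i j (v - a) := by
  rw [XX, XA, ψA, RingQuot.liftAlgHom_mkAlgHom_apply, ψf_ι]

end PsiHom

end Stmt19
namespace Stmt19

open Finset

section PhiHom

variable {m n : ℕ} [NeZero m]

/-- The images `Φ_{ij}(g) = ∑_v χ(-gv) X_{(i,0),(j,v)}` of the generators `a_{ij}(g)`. -/
noncomputable def Φ (m n : ℕ) [NeZero m] (i j : Fin n) (g : ZMod m) :
    AAut (Fin n × ZMod m) (unionEdges (ZMod m) (polyEdges m) n) :=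
  ∑ v : ZMod m, χ m (-(g * v)) • XX m n i 0 j v

lemma conv' {F G B : ZMod m → AAut (Fin n × ZMod m) (unionEdges (ZMod m) (polyEdges m) n)}
    (hmul : ∀ v w, F v * G w = if v = w then B v else 0) (g h : ZMod m) :
    (∑ v : ZMod m, χ m (-(g * v)) • F v) * (∑ w : ZMod m, χ m (-(h * w)) • G w)
      = ∑ v : ZMod m, χ m (-((g + h) * v)) • B v := by
  rw [Finset.sum_mul_sum]
  refine Finset.sum_congr rfl fun v _ => ?_
  have hz : ∀ w : ZMod m, w ≠ v → (χ m (-(g * v)) • F v) * (χ m (-(h * w)) • G w) = 0 := by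
    intro w hw
    rw [smul_mul_smul_comm, hmul, if_neg (fun hc => hw hc.symm), smul_zero]
  rw [Fintype.sum_eq_single v hz, smul_mul_smul_comm, hmul, if_pos rfl]
  congr 1
  rw [← AddChar.map_add_eq_mul]
  congr 1
  ring

lemma Φ_mul_row (i j k : Fin n) (g h : ZMod m) :
    Φ m n i j g * Φ m n i k h = if j = k then Φ m n i j (g + h) else 0 := by
  have hmul : ∀ v w : ZMod m, XX m n i 0 j v * XX m n i 0 k w
      = if v = w then (if j = k then XX m n i 0 j v else 0) else 0 := by
    intro v w
    rw [XX, XX, XA_mul_row]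
    by_cases hvw : v = w
    · subst hvw
      by_cases hjk : j = k
      · subst hjk; simp
      · simp [hjk, Prod.ext_iff]
    · simp [hvw, Prod.ext_iff]
  rw [Φ, Φ, conv' (B := fun v => if j = k then XX m n i 0 j v else 0) hmul]
  by_cases hjk : j = k
  · simp only [if_pos hjk, Φ]
  · simp [hjk]

lemma Φ_mul_col (i j k : Fin n) (g h : ZMod m) :
    Φ m n j i g * Φ m n k i h = if j = k then Φ m n j i (g + h) else 0 := by
  have hmul : ∀ v w : ZMod m, XX m n j 0 i v * XX m n k 0 i w
      = if v = w then (if j = k then XX m n j 0 i v else 0) else 0 := by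
    intro v w
    rw [Xcol0]
    by_cases hvw : v = w
    · subst hvw
      by_cases hjk : j = k
      · subst hjk; simp
      · simp [hjk]
    · simp [hvw]
  rw [Φ, Φ, conv' (B := fun v => if j = k then XX m n j 0 i v else 0) hmul]
  by_cases hjk : j = k
  · simp only [if_pos hjk, Φ]
  · simp [hjk]

lemma Φ_rowSum (i : Fin n) : ∑ l : Fin n, Φ m n i l 0 = 1 := by
  have h1 : ∀ l : Fin n, Φ m n i l 0 = ∑ v : ZMod m, XX m n i 0 l v := by
    intro l
    rw [Φ]
    refine Finset.sum_congr rfl fun v _ => ?_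
    simp
  rw [← XA_rowSum (E := unionEdges (ZMod m) (polyEdges m) n) ((i, (0 : ZMod m)) : Fin n × ZMod m),
    Fintype.sum_prod_type]
  exact Finset.sum_congr rfl fun l _ => h1 l

lemma Φ_colSum (i : Fin n) : ∑ l : Fin n, Φ m n l i 0 = 1 := by
  have h1 : ∀ l : Fin n, Φ m n l i 0 = ∑ a : ZMod m, XX m n l a i 0 := by
    intro l
    rw [Φ]
    calc ∑ v : ZMod m, χ m (-(0 * v)) • XX m n l 0 i v
        = ∑ v : ZMod m, XX m n l (-v) i 0 := by
          refine Finset.sum_congr rfl fun v _ => ?_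
          have h2 : XX m n l 0 i v = XX m n l (-v) i 0 := by
            simpa using shift_add l 0 i v (-v)
          simp [h2]
      _ = ∑ a : ZMod m, XX m n l a i 0 :=
          Fintype.sum_equiv (Equiv.neg (ZMod m)) _ _ fun v => rfl
  rw [← XA_colSum (E := unionEdges (ZMod m) (polyEdges m) n) ((i, (0 : ZMod m)) : Fin n × ZMod m),
    Fintype.sum_prod_type]
  exact Finset.sum_congr rfl fun l _ => h1 l

noncomputable def φf (m n : ℕ) [NeZero m] :
    FreeAlgebra ℂ (Fin n × Fin n × ZMod m) →ₐ[ℂ]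
      AAut (Fin n × ZMod m) (unionEdges (ZMod m) (polyEdges m) n) :=
  FreeAlgebra.lift ℂ (fun p => Φ m n p.1 p.2.1 p.2.2)

lemma φf_ι (i j : Fin n) (g : ZMod m) :
    φf m n (FreeAlgebra.ι ℂ (i, j, g)) = Φ m n i j g := by
  simp [φf]

lemma φ_rel {x y : FreeAlgebra ℂ (Fin n × Fin n × ZMod m)} (h : AnZRel m n x y) :
    φf m n x = φf m n y := by
  cases h with
  | row i j k g h =>
    rw [map_mul, φf_ι, φf_ι, Φ_mul_row, apply_ite (φf m n), map_zero, φf_ι]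
  | col i j k g h =>
    rw [map_mul, φf_ι, φf_ι, Φ_mul_col, apply_ite (φf m n), map_zero, φf_ι]
  | rowSum i =>
    rw [map_sum, map_one]
    calc ∑ l : Fin n, φf m n (FreeAlgebra.ι ℂ (i, l, (0 : ZMod m)))
        = ∑ l : Fin n, Φ m n i l 0 := Finset.sum_congr rfl fun l _ => φf_ι i l 0
      _ = 1 := Φ_rowSum i
  | colSum i =>
    rw [map_sum, map_one]
    calc ∑ l : Fin n, φf m n (FreeAlgebra.ι ℂ (l, i, (0 : ZMod m)))
        = ∑ l : Fin n, Φ m n l i 0 := Finset.sum_congr rfl fun l _ => φf_ι l i 0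
      _ = 1 := Φ_colSum i

noncomputable def φA (m n : ℕ) [NeZero m] :
    AnZ m n →ₐ[ℂ] AAut (Fin n × ZMod m) (unionEdges (ZMod m) (polyEdges m) n) :=
  RingQuot.liftAlgHom ℂ ⟨φf m n, fun _ _ h => φ_rel h⟩

lemma φA_A (i j : Fin n) (g : ZMod m) : φA m n (Amk m n i j g) = Φ m n i j g := by
  rw [Amk, φA, RingQuot.liftAlgHom_mkAlgHom_apply, φf_ι]

lemma φΨ (i j : Fin n) (d : ZMod m) : φA m n (Ψ m n i j d) = XX m n i 0 j d := by
  rw [Ψ, map_smul, map_sum]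
  have h1 : ∀ g : ZMod m, φA m n (χ m (g * d) • Amk m n i j g)
      = ∑ w : ZMod m, (χ m (g * d) * χ m (-(g * w))) • XX m n i 0 j w := by
    intro g
    rw [map_smul, φA_A, Φ, Finset.smul_sum]
    refine Finset.sum_congr rfl fun w _ => ?_
    rw [smul_smul]
  calc (m : ℂ)⁻¹ • ∑ g : ZMod m, φA m n (χ m (g * d) • Amk m n i j g)
      = (m : ℂ)⁻¹ • ∑ g : ZMod m, ∑ w : ZMod m,
          (χ m (g * d) * χ m (-(g * w))) • XX m n i 0 j w := by
        rw [Finset.sum_congr rfl fun g _ => h1 g]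
    _ = (m : ℂ)⁻¹ • ∑ w : ZMod m, (∑ g : ZMod m, χ m (g * (d - w))) • XX m n i 0 j w := by
        rw [Finset.sum_comm]
        congr 1
        refine Finset.sum_congr rfl fun w _ => ?_
        rw [← Finset.sum_smul]
        congr 1
        refine Finset.sum_congr rfl fun g _ => ?_
        rw [← AddChar.map_add_eq_mul]
        congr 1
        ring
    _ = (m : ℂ)⁻¹ • ∑ w : ZMod m, (if w = d then (m : ℂ) else 0) • XX m n i 0 j w := by
        congr 1
        refine Finset.sum_congr rfl fun w _ => ?_
        rw [sum_χ']
        congr 1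
        simp [sub_eq_zero, eq_comm]
    _ = XX m n i 0 j d := by
        simp only [ite_smul, zero_smul]
        rw [Finset.sum_ite_eq' Finset.univ (d : ZMod m) (fun w => (m : ℂ) • XX m n i 0 j w)]
        simp [smul_smul, inv_mul_cancel₀ (hm0 (m := m))]

lemma ψΦ (i j : Fin n) (g : ZMod m) : ψA m n (Φ m n i j g) = Amk m n i j g := by
  rw [Φ, map_sum]
  have h1 : ∀ v : ZMod m, ψA m n (χ m (-(g * v)) • XX m n i 0 j v)
      = (m : ℂ)⁻¹ • ∑ h : ZMod m, (χ m (-(g * v)) * χ m (h * v)) • Amk m n i j h := by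
    intro v
    rw [map_smul, ψA_XX, sub_zero, Ψ, smul_comm, Finset.smul_sum]
    congr 1
    refine Finset.sum_congr rfl fun h _ => ?_
    rw [smul_smul]
  calc ∑ v : ZMod m, ψA m n (χ m (-(g * v)) • XX m n i 0 j v)
      = (m : ℂ)⁻¹ • ∑ v : ZMod m, ∑ h : ZMod m,
          (χ m (-(g * v)) * χ m (h * v)) • Amk m n i j h := by
        rw [Finset.sum_congr rfl fun v _ => h1 v, Finset.smul_sum]
    _ = (m : ℂ)⁻¹ • ∑ h : ZMod m, (∑ v : ZMod m, χ m ((h - g) * v)) • Amk m n i j h := by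
        rw [Finset.sum_comm]
        congr 1
        refine Finset.sum_congr rfl fun h _ => ?_
        rw [← Finset.sum_smul]
        congr 1
        refine Finset.sum_congr rfl fun v _ => ?_
        rw [← AddChar.map_add_eq_mul]
        congr 1
        ring
    _ = (m : ℂ)⁻¹ • ∑ h : ZMod m, (if h = g then (m : ℂ) else 0) • Amk m n i j h := by
        congr 1
        refine Finset.sum_congr rfl fun h _ => ?_
        rw [sum_χ]
        congr 1
        simp [sub_eq_zero]
    _ = Amk m n i j g := by
        simp only [ite_smul, zero_smul]
        rw [Finset.sum_ite_eq' Finset.univ (g : ZMod m) (fun h => (m : ℂ) • Amk m n i j h)]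
        simp [smul_smul, inv_mul_cancel₀ (hm0 (m := m))]

lemma comp1 : (φA m n).comp (ψA m n) = AlgHom.id ℂ _ := by
  refine RingQuot.ringQuot_ext' ℂ _ _ ?_
  refine FreeAlgebra.hom_ext ?_
  funext p
  obtain ⟨⟨i, a⟩, ⟨j, v⟩⟩ := p
  show φA m n (ψA m n (XX m n i a j v)) = XX m n i a j v
  rw [ψA_XX, φΨ]
  have h := shift_add i 0 j (v - a) a
  simpa using h

lemma comp2 : (ψA m n).comp (φA m n) = AlgHom.id ℂ _ := by
  refine RingQuot.ringQuot_ext' ℂ _ _ ?_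
  refine FreeAlgebra.hom_ext ?_
  funext p
  obtain ⟨i, j, g⟩ := p
  show ψA m n (φA m n (Amk m n i j g)) = Amk m n i j g
  rw [φA_A, ψΦ]

end PhiHom

end Stmt19

/-- For `m ≥ 1` and `n ≥ 1`, the quantum automorphism algebra
`A_aut(𝒫_m^{⊔n})` of the `n`-fold disjoint union of the polygonal graph `𝒫_m` is
isomorphic as a `ℂ`-algebra to the universal algebra `𝒜_n(ℤ/mℤ)`. -/
theorem stmt_19 (m : ℕ) [NeZero m] (hm : 1 ≤ m) (n : ℕ) (hn : 1 ≤ n) :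
    Nonempty
      (AAut (Fin n × ZMod m) (unionEdges (ZMod m) (polyEdges m) n) ≃ₐ[ℂ] AnZ m n) := by
  exact ⟨AlgEquiv.ofAlgHom (Stmt19.ψA m n) (Stmt19.φA m n) Stmt19.comp2 Stmt19.comp1⟩
end
end
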